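/- arXiv:1411.1290 — 12 statements merged into one kernel-verified Lean document; each statement's English description precedes it below -/
import Mathlib

section
/- Let a₁,a₂,a₃,b₁,b₂,b₃ > 0 satisfy a₁+a₂+a₃ ≤ b₁+b₂+b₃, a₁a₂+a₁a₃+a₂a₃ ≤ b₁b₂+b₁b₃+b₂b₃, and a₁a₂a₃ = b₁b₂b₃. Then (log a₁)² + (log a₂)² + (log a₃)² ≤ (log b₁)² + (log b₂)² + (log b₃)². -/
/-!
For `x > 0` the kernel `(log (t + x) + log (t + x⁻¹) - 2 log (t + 1)) / t` is nonnegative, decays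
like `t⁻²`, and its integral over `t > 0` is `(log x)²`: both sides vanish at `x = 1` and have
derivative `2 log x / x`. Summed over a family `aᵢ`, the numerator becomes
`log ∏ᵢ (t + aᵢ)(t + aᵢ⁻¹) - 2n log (t + 1)`, so the inequality between sums of squared logarithms
follows from the pointwise inequality between these products for all `t > 0`. For three numbers
`∏ᵢ (t + aᵢ) = t³ + e₁ t² + e₂ t + e₃` is monotone in the elementary symmetric functions `eₖ`,
and since `e₁(a⁻¹) = e₂ / e₃` and `e₂(a⁻¹) = e₁ / e₃`, the reciprocals satisfy the same
hypotheses as the numbers themselves.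
-/

open Real MeasureTheory Set Filter Topology

noncomputable def logSqKernel (x t : ℝ) : ℝ :=
  (log (t + x) + log (t + x⁻¹) - 2 * log (t + 1)) / t

noncomputable def logSqKernelDeriv (x t : ℝ) : ℝ :=
  (x ^ 2 - 1) / (x * (x * t + 1) * (t + x))

lemma logSqKernel_eq {x t : ℝ} (hx : 0 < x) (ht : 0 < t) :
    logSqKernel x t = log (1 + (x + x⁻¹ - 2) * t / (t + 1) ^ 2) / t := by
  have h : 1 + (x + x⁻¹ - 2) * t / (t + 1) ^ 2 = (t + x) * (t + x⁻¹) / (t + 1) ^ 2 := by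
    field_simp; ring
  rw [logSqKernel, h, log_div (by positivity) (by positivity),
    log_mul (by positivity) (by positivity), log_pow]
  push_cast; ring

lemma add_inv_sub_two_nonneg {x : ℝ} (hx : 0 < x) : 0 ≤ x + x⁻¹ - 2 := by
  have : x + x⁻¹ - 2 = (x - 1) ^ 2 / x := by field_simp; ring
  rw [this]; positivity

lemma logSqKernel_nonneg {x t : ℝ} (hx : 0 < x) (ht : 0 < t) : 0 ≤ logSqKernel x t := by
  rw [logSqKernel_eq hx ht]
  have := add_inv_sub_two_nonneg hx
  exact div_nonneg (log_nonneg (by simp only [le_add_iff_nonneg_right]; positivity)) ht.le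

lemma logSqKernel_le {x t : ℝ} (hx : 0 < x) (ht : 0 < t) :
    logSqKernel x t ≤ (x + x⁻¹ - 2) * (1 + t ^ 2)⁻¹ := by
  have hc := add_inv_sub_two_nonneg hx
  rw [logSqKernel_eq hx ht, div_le_iff₀ ht]
  calc log (1 + (x + x⁻¹ - 2) * t / (t + 1) ^ 2)
      ≤ (x + x⁻¹ - 2) * t / (t + 1) ^ 2 := by
        have := log_le_sub_one_of_pos (x := 1 + (x + x⁻¹ - 2) * t / (t + 1) ^ 2) (by positivity)
        linarith
    _ ≤ (x + x⁻¹ - 2) * (1 + t ^ 2)⁻¹ * t := by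
        rw [div_eq_mul_inv, mul_right_comm]
        gcongr
        nlinarith

lemma continuousOn_logSqKernel {x : ℝ} (hx : 0 < x) :
    ContinuousOn (logSqKernel x) (Ioi 0) := by
  intro t ht
  simp only [mem_Ioi] at ht
  have : 0 < x⁻¹ := inv_pos.2 hx
  unfold logSqKernel
  exact ContinuousAt.continuousWithinAt (by fun_prop (disch := first | positivity | linarith))

lemma integrableOn_logSqKernel {x : ℝ} (hx : 0 < x) : IntegrableOn (logSqKernel x) (Ioi 0) := by
  refine Integrable.mono' (integrable_inv_one_add_sq.const_mul (x + x⁻¹ - 2)).integrableOn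
    ((continuousOn_logSqKernel hx).aestronglyMeasurable measurableSet_Ioi) ?_
  refine (ae_restrict_iff' measurableSet_Ioi).2 (Eventually.of_forall fun t ht => ?_)
  rw [norm_of_nonneg (logSqKernel_nonneg hx ht)]
  exact logSqKernel_le hx ht

lemma hasDerivAt_logSqKernel {x t : ℝ} (hx : 0 < x) (ht : 0 < t) :
    HasDerivAt (logSqKernel · t) (logSqKernelDeriv x t) x := by
  have h := ((((hasDerivAt_id x).const_add t).log (by positivity)).add
    (((hasDerivAt_inv hx.ne').const_add t).log (by positivity))).sub_const (2 * log (t + 1))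
    |>.div_const t
  refine h.congr_deriv ?_
  simp only [logSqKernelDeriv, id]
  field_simp
  ring

lemma abs_logSqKernelDeriv_le {l u x t : ℝ} (hl : 0 < l) (hlx : l ≤ x) (hxu : x ≤ u)
    (ht : 0 ≤ t) : |logSqKernelDeriv x t| ≤ (u ^ 2 + 1) / l ^ 2 * (1 + t ^ 2)⁻¹ := by
  have hx : 0 < x := hl.trans_le hlx
  have hden : x ^ 2 * (1 + t ^ 2) ≤ x * (x * t + 1) * (t + x) := by
    nlinarith [mul_nonneg (mul_nonneg hx.le ht) (sq_nonneg x), mul_nonneg hx.le ht]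
  rw [logSqKernelDeriv, abs_div, abs_of_pos (by positivity : 0 < x * (x * t + 1) * (t + x)),
    div_le_iff₀ (by positivity)]
  calc |x ^ 2 - 1| ≤ (u ^ 2 + 1) := by rw [abs_le]; constructor <;> nlinarith
    _ = (u ^ 2 + 1) / l ^ 2 * (1 + t ^ 2)⁻¹ * (l ^ 2 * (1 + t ^ 2)) := by field_simp
    _ ≤ (u ^ 2 + 1) / l ^ 2 * (1 + t ^ 2)⁻¹ * (x * (x * t + 1) * (t + x)) := by
        refine mul_le_mul_of_nonneg_left (le_trans ?_ hden) (by positivity)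
        gcongr

lemma continuousOn_logSqKernelDeriv {x : ℝ} (hx : 0 < x) :
    ContinuousOn (logSqKernelDeriv x) (Ici 0) := by
  intro t ht
  simp only [mem_Ici] at ht
  unfold logSqKernelDeriv
  exact ContinuousAt.continuousWithinAt (by fun_prop (disch := positivity))

lemma tendsto_log_mul_add_one_sub_log_add {x : ℝ} (hx : 0 < x) :
    Tendsto (fun t => log (x * t + 1) - log (t + x)) atTop (𝓝 (log x)) := by
  have hquot : Tendsto (fun t => x - (x ^ 2 - 1) / (t + x)) atTop (𝓝 x) := by
    simpa using tendsto_const_nhds.sub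
      (tendsto_const_nhds.div_atTop (tendsto_atTop_add_const_right _ x tendsto_id))
  refine (((continuousAt_log hx.ne').tendsto).comp hquot).congr' ?_
  filter_upwards [eventually_gt_atTop 0] with t ht
  have : x - (x ^ 2 - 1) / (t + x) = (x * t + 1) / (t + x) := by field_simp; ring
  rw [Function.comp_apply, this, log_div (by positivity) (by positivity)]

lemma integral_logSqKernelDeriv {x : ℝ} (hx : 0 < x) :
    ∫ t in Ioi 0, logSqKernelDeriv x t = 2 * log x / x := by
  have hint : IntegrableOn (logSqKernelDeriv x) (Ioi 0) := by
    refine Integrable.mono'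
      (integrable_inv_one_add_sq.const_mul ((x ^ 2 + 1) / x ^ 2)).integrableOn
      ((continuousOn_logSqKernelDeriv hx).mono Ioi_subset_Ici_self
        |>.aestronglyMeasurable measurableSet_Ioi) ?_
    refine (ae_restrict_iff' measurableSet_Ioi).2 (Eventually.of_forall fun t ht => ?_)
    exact abs_logSqKernelDeriv_le hx le_rfl le_rfl (le_of_lt ht)
  have hderiv : ∀ t ∈ Ici (0 : ℝ),
      HasDerivAt (fun t => (log (x * t + 1) - log (t + x)) / x) (logSqKernelDeriv x t) t := by
    intro t ht
    simp only [mem_Ici] at ht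
    have h := ((((hasDerivAt_id t).const_mul x).add_const 1).log (by positivity)).sub
      (((hasDerivAt_id t).add_const x).log (by positivity)) |>.div_const x
    refine h.congr_deriv ?_
    simp only [logSqKernelDeriv, id]
    field_simp
    ring
  rw [integral_Ioi_of_hasDerivAt_of_tendsto' hderiv hint
    ((tendsto_log_mul_add_one_sub_log_add hx).div_const x)]
  simp only [mul_zero, zero_add, log_one]
  ring

lemma hasDerivAt_integral_logSqKernel {x : ℝ} (hx : 0 < x) :
    HasDerivAt (fun y => ∫ t in Ioi 0, logSqKernel y t) (2 * log x / x) x := by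
  have hs : Icc (x / 2) (2 * x) ∈ 𝓝 x := Icc_mem_nhds (by linarith) (by linarith)
  have key := hasDerivAt_integral_of_dominated_loc_of_deriv_le (μ := volume.restrict (Ioi 0))
    (bound := fun t => ((2 * x) ^ 2 + 1) / (x / 2) ^ 2 * (1 + t ^ 2)⁻¹) hs
    (Eventually.mono (eventually_gt_nhds hx) fun y hy =>
      (continuousOn_logSqKernel hy).aestronglyMeasurable measurableSet_Ioi)
    (integrableOn_logSqKernel hx)
    ((continuousOn_logSqKernelDeriv hx).mono Ioi_subset_Ici_self
      |>.aestronglyMeasurable measurableSet_Ioi)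
    ((ae_restrict_iff' measurableSet_Ioi).2 (Eventually.of_forall fun t ht y hy =>
      abs_logSqKernelDeriv_le (by positivity) hy.1 hy.2 (le_of_lt ht)))
    (integrable_inv_one_add_sq.const_mul _).integrableOn
    ((ae_restrict_iff' measurableSet_Ioi).2 (Eventually.of_forall fun t ht y hy =>
      hasDerivAt_logSqKernel (by linarith [hy.1]) ht))
  rw [← integral_logSqKernelDeriv hx]
  exact key.2

lemma integral_logSqKernel {x : ℝ} (hx : 0 < x) :
    ∫ t in Ioi 0, logSqKernel x t = log x ^ 2 := by
  have hderiv : ∀ y ∈ Ioi (0 : ℝ), HasDerivAt (fun y => log y ^ 2) (2 * log y / y) y := by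
    intro y hy
    refine ((hasDerivAt_log (ne_of_gt hy)).pow 2).congr_deriv ?_
    norm_num
    ring
  refine isOpen_Ioi.eqOn_of_deriv_eq isPreconnected_Ioi
    (fun y hy => (hasDerivAt_integral_logSqKernel hy).differentiableAt.differentiableWithinAt)
    (fun y hy => (hderiv y hy).differentiableAt.differentiableWithinAt)
    (fun y hy => (hasDerivAt_integral_logSqKernel hy).deriv.trans (hderiv y hy).deriv.symm)
    (mem_Ioi.2 one_pos) ?_ hx
  have h1 : logSqKernel 1 = 0 := by
    funext t; simp only [logSqKernel, inv_one, Pi.zero_apply]; ring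
  simp [h1]

lemma sum_logSqKernel_eq {ι : Type*} (s : Finset ι) {a : ι → ℝ} (ha : ∀ i ∈ s, 0 < a i)
    {t : ℝ} (ht : 0 < t) :
    ∑ i ∈ s, logSqKernel (a i) t =
      (log (∏ i ∈ s, (t + a i) * (t + (a i)⁻¹)) - 2 * s.card * log (t + 1)) / t := by
  have hpos : ∀ i ∈ s, 0 < t + a i ∧ 0 < t + (a i)⁻¹ := fun i hi =>
    ⟨by linarith [ha i hi], by have := inv_pos.2 (ha i hi); linarith⟩
  rw [log_prod fun i hi => (mul_pos (hpos i hi).1 (hpos i hi).2).ne', Finset.sum_congr rfl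
    fun i hi => log_mul (hpos i hi).1.ne' (hpos i hi).2.ne']
  simp only [logSqKernel, ← Finset.sum_div, Finset.sum_sub_distrib, Finset.sum_const,
    nsmul_eq_mul]
  ring

lemma sum_logSqKernel_le_of_prod_le {ι : Type*} (s : Finset ι) {a b : ι → ℝ}
    (ha : ∀ i ∈ s, 0 < a i) (hb : ∀ i ∈ s, 0 < b i) {t : ℝ} (ht : 0 < t)
    (hab : ∏ i ∈ s, (t + a i) * (t + (a i)⁻¹) ≤ ∏ i ∈ s, (t + b i) * (t + (b i)⁻¹)) :
    ∑ i ∈ s, logSqKernel (a i) t ≤ ∑ i ∈ s, logSqKernel (b i) t := by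
  rw [sum_logSqKernel_eq s ha ht, sum_logSqKernel_eq s hb ht]
  have hpos : 0 < ∏ i ∈ s, (t + a i) * (t + (a i)⁻¹) := Finset.prod_pos fun i hi => by
    have := ha i hi; positivity
  gcongr

theorem sum_log_sq_le_of_prod_le {ι : Type*} (s : Finset ι) {a b : ι → ℝ}
    (ha : ∀ i ∈ s, 0 < a i) (hb : ∀ i ∈ s, 0 < b i)
    (hab : ∀ t > 0, ∏ i ∈ s, (t + a i) * (t + (a i)⁻¹) ≤ ∏ i ∈ s, (t + b i) * (t + (b i)⁻¹)) :
    ∑ i ∈ s, log (a i) ^ 2 ≤ ∑ i ∈ s, log (b i) ^ 2 := by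
  rw [← Finset.sum_congr rfl fun i hi => integral_logSqKernel (ha i hi),
    ← Finset.sum_congr rfl fun i hi => integral_logSqKernel (hb i hi),
    ← integral_finsetSum s fun i hi => integrableOn_logSqKernel (ha i hi),
    ← integral_finsetSum s fun i hi => integrableOn_logSqKernel (hb i hi)]
  exact setIntegral_mono_on
    (integrable_finsetSum s fun i hi => integrableOn_logSqKernel (ha i hi))
    (integrable_finsetSum s fun i hi => integrableOn_logSqKernel (hb i hi)) measurableSet_Ioi
    fun t ht => sum_logSqKernel_le_of_prod_le s ha hb ht (hab t ht)

lemma prod_three_add_le {a1 a2 a3 b1 b2 b3 t : ℝ} (ht : 0 ≤ t)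
    (h1 : a1 + a2 + a3 ≤ b1 + b2 + b3)
    (h2 : a1 * a2 + a1 * a3 + a2 * a3 ≤ b1 * b2 + b1 * b3 + b2 * b3)
    (h3 : a1 * a2 * a3 ≤ b1 * b2 * b3) :
    (t + a1) * (t + a2) * (t + a3) ≤ (t + b1) * (t + b2) * (t + b3) := by
  nlinarith [mul_le_mul_of_nonneg_left h1 (sq_nonneg t), mul_le_mul_of_nonneg_left h2 ht]

lemma inv_add_inv_add_inv {a1 a2 a3 : ℝ} (ha1 : a1 ≠ 0) (ha2 : a2 ≠ 0) (ha3 : a3 ≠ 0) :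
    a1⁻¹ + a2⁻¹ + a3⁻¹ = (a1 * a2 + a1 * a3 + a2 * a3) / (a1 * a2 * a3) := by
  field_simp; ring

lemma inv_mul_inv_add_inv_mul_inv {a1 a2 a3 : ℝ}
    (ha1 : a1 ≠ 0) (ha2 : a2 ≠ 0) (ha3 : a3 ≠ 0) :
    a1⁻¹ * a2⁻¹ + a1⁻¹ * a3⁻¹ + a2⁻¹ * a3⁻¹ = (a1 + a2 + a3) / (a1 * a2 * a3) := by
  field_simp; ring

lemma prod_three_add_mul_add_inv_le {a1 a2 a3 b1 b2 b3 t : ℝ}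
    (ha1 : 0 < a1) (ha2 : 0 < a2) (ha3 : 0 < a3)
    (hb1 : 0 < b1) (hb2 : 0 < b2) (hb3 : 0 < b3)
    (h1 : a1 + a2 + a3 ≤ b1 + b2 + b3)
    (h2 : a1 * a2 + a1 * a3 + a2 * a3 ≤ b1 * b2 + b1 * b3 + b2 * b3)
    (h3 : a1 * a2 * a3 = b1 * b2 * b3) (ht : 0 ≤ t) :
    (t + a1) * (t + a1⁻¹) * ((t + a2) * (t + a2⁻¹)) * ((t + a3) * (t + a3⁻¹)) ≤
      (t + b1) * (t + b1⁻¹) * ((t + b2) * (t + b2⁻¹)) * ((t + b3) * (t + b3⁻¹)) := by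
  have hinv1 : a1⁻¹ + a2⁻¹ + a3⁻¹ ≤ b1⁻¹ + b2⁻¹ + b3⁻¹ := by
    rw [inv_add_inv_add_inv ha1.ne' ha2.ne' ha3.ne', inv_add_inv_add_inv hb1.ne' hb2.ne' hb3.ne',
      h3]
    gcongr
  have hinv2 : a1⁻¹ * a2⁻¹ + a1⁻¹ * a3⁻¹ + a2⁻¹ * a3⁻¹ ≤
      b1⁻¹ * b2⁻¹ + b1⁻¹ * b3⁻¹ + b2⁻¹ * b3⁻¹ := by
    rw [inv_mul_inv_add_inv_mul_inv ha1.ne' ha2.ne' ha3.ne',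
      inv_mul_inv_add_inv_mul_inv hb1.ne' hb2.ne' hb3.ne', h3]
    gcongr
  have hinv3 : a1⁻¹ * a2⁻¹ * a3⁻¹ ≤ b1⁻¹ * b2⁻¹ * b3⁻¹ := by
    simp only [← mul_inv, h3, le_refl]
  calc _ = (t + a1) * (t + a2) * (t + a3) * ((t + a1⁻¹) * (t + a2⁻¹) * (t + a3⁻¹)) := by ring
    _ ≤ (t + b1) * (t + b2) * (t + b3) * ((t + b1⁻¹) * (t + b2⁻¹) * (t + b3⁻¹)) :=
      mul_le_mul (prod_three_add_le ht h1 h2 h3.le) (prod_three_add_le ht hinv1 hinv2 hinv3)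
        (by positivity) (by positivity)
    _ = _ := by ring

theorem ssli_three (a1 a2 a3 b1 b2 b3 : ℝ)
    (ha1 : 0 < a1) (ha2 : 0 < a2) (ha3 : 0 < a3)
    (hb1 : 0 < b1) (hb2 : 0 < b2) (hb3 : 0 < b3)
    (h1 : a1 + a2 + a3 ≤ b1 + b2 + b3)
    (h2 : a1 * a2 + a1 * a3 + a2 * a3 ≤ b1 * b2 + b1 * b3 + b2 * b3)
    (h3 : a1 * a2 * a3 = b1 * b2 * b3) :
    (log a1) ^ 2 + (log a2) ^ 2 + (log a3) ^ 2 ≤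
      (log b1) ^ 2 + (log b2) ^ 2 + (log b3) ^ 2 := by
  have hpos : ∀ {c1 c2 c3 : ℝ}, 0 < c1 → 0 < c2 → 0 < c3 →
      ∀ i ∈ Finset.univ, 0 < ![c1, c2, c3] i :=
    fun hc1 hc2 hc3 i _ => by fin_cases i <;> assumption
  have hsum := sum_log_sq_le_of_prod_le Finset.univ (hpos ha1 ha2 ha3) (hpos hb1 hb2 hb3)
    fun t ht => by
      simpa [Fin.prod_univ_three] using
        prod_three_add_mul_add_inv_le ha1 ha2 ha3 hb1 hb2 hb3 h1 h2 h3 ht.le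
  simpa [Fin.sum_univ_three] using hsum
end

section
/- Let a₁,a₂,b₁,b₂ > 0 satisfy a₁+a₂ ≤ b₁+b₂ and a₁a₂ = b₁b₂. Then (log a₁)² + (log a₂)² ≤ (log b₁)² + (log b₂)². -/
/-!
In logarithmic coordinates `xᵢ = log aᵢ`, `yᵢ = log bᵢ` the product condition says that
`x₁ + x₂ = y₁ + y₂ = 2m`, and then `a₁ + a₂ = 2 eᵐ cosh ((x₁ - x₂) / 2)`. Since `cosh` is even and
increasing on `[0, ∞)`, the sum condition becomes `|x₁ - x₂| ≤ |y₁ - y₂|`, and the claim follows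
from `x₁² + x₂² = ((x₁ + x₂)² + (x₁ - x₂)²) / 2`.
-/

open Real

lemma exp_add_exp_eq_two_mul_exp_mul_cosh (x y : ℝ) :
    exp x + exp y = 2 * exp ((x + y) / 2) * cosh ((x - y) / 2) := by
  rw [cosh_eq, mul_div_assoc', mul_add, mul_assoc, mul_assoc, ← exp_add, ← exp_add]
  ring_nf

lemma abs_sub_le_abs_sub_of_exp_add_exp_le {x₁ x₂ y₁ y₂ : ℝ} (hsum : x₁ + x₂ = y₁ + y₂)
    (hexp : exp x₁ + exp x₂ ≤ exp y₁ + exp y₂) : |x₁ - x₂| ≤ |y₁ - y₂| := by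
  rw [exp_add_exp_eq_two_mul_exp_mul_cosh, exp_add_exp_eq_two_mul_exp_mul_cosh, hsum] at hexp
  have hcosh : cosh ((x₁ - x₂) / 2) ≤ cosh ((y₁ - y₂) / 2) :=
    le_of_mul_le_mul_left hexp (by positivity)
  rw [cosh_le_cosh, abs_div, abs_div] at hcosh
  exact (div_le_div_iff_of_pos_right (by norm_num)).mp hcosh

lemma sq_add_sq_le_of_exp_add_exp_le {x₁ x₂ y₁ y₂ : ℝ} (hsum : x₁ + x₂ = y₁ + y₂)
    (hexp : exp x₁ + exp x₂ ≤ exp y₁ + exp y₂) : x₁ ^ 2 + x₂ ^ 2 ≤ y₁ ^ 2 + y₂ ^ 2 := by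
  have hdiff : (x₁ - x₂) ^ 2 ≤ (y₁ - y₂) ^ 2 :=
    sq_le_sq.mpr (abs_sub_le_abs_sub_of_exp_add_exp_le hsum hexp)
  calc x₁ ^ 2 + x₂ ^ 2 = ((x₁ + x₂) ^ 2 + (x₁ - x₂) ^ 2) / 2 := by ring
    _ ≤ ((y₁ + y₂) ^ 2 + (y₁ - y₂) ^ 2) / 2 := by rw [hsum]; linarith
    _ = y₁ ^ 2 + y₂ ^ 2 := by ring

theorem ssli_two (a1 a2 b1 b2 : ℝ)
    (ha1 : 0 < a1) (ha2 : 0 < a2) (hb1 : 0 < b1) (hb2 : 0 < b2)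
    (h1 : a1 + a2 ≤ b1 + b2) (h2 : a1 * a2 = b1 * b2) :
    (log a1) ^ 2 + (log a2) ^ 2 ≤ (log b1) ^ 2 + (log b2) ^ 2 := by
  have hsum : log a1 + log a2 = log b1 + log b2 := by
    rw [← log_mul ha1.ne' ha2.ne', ← log_mul hb1.ne' hb2.ne', h2]
  apply sq_add_sq_le_of_exp_add_exp_le hsum
  rwa [exp_log ha1, exp_log ha2, exp_log hb1, exp_log hb2]
end

section
/- Let a₁,a₂,a₃,a₄,b₁,b₂,b₃,b₄ > 0 satisfy e_k(a) ≤ e_k(b) for k = 1,2,3 and e₄(a) = e₄(b), where e_k denotes the k-th elementary symmetric polynomial in four variables. Then Σᵢ (log aᵢ)² ≤ Σᵢ (log bᵢ)². -/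
/-!
For `0 ≤ u ≤ 1` and `x > 0` let `mixLog u x = log (1 - u + u x) + log (u + (1 - u) x) - log x`.
The kernel `(y² - 1) / (y (1 - u + u y) (u + (1 - u) y))` is both the `y`-derivative of
`mixLog u y / (u (1 - u))` and the `u`-derivative of
`(log (1 - u + u y) - log (u + (1 - u) y)) / y`, so integrating it over `[0, 1] × [1, x]` in both orders gives
`(log x)² = ∫₀¹ mixLog u x / (u (1 - u)) du`.
Summed over a family, `∑ mixLog u aᵢ = log ∏ (1 - u + u aᵢ) + log ∏ (u + (1 - u) aᵢ) - log ∏ aᵢ`,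
and for four variables `∏ (v + u aᵢ) = ∑ₖ v⁴⁻ᵏ uᵏ eₖ(a)` with nonnegative weights. Hence the
hypotheses on the `eₖ` make the integrand for `a` pointwise at most the one for `b`.
-/

open Real MeasureTheory Set

theorem intervalIntegral_integral_swap_of_continuousOn {f : ℝ → ℝ → ℝ} {a b c d : ℝ}
    (hab : a ≤ b) (hcd : c ≤ d) (hf : ContinuousOn (Function.uncurry f) (Icc a b ×ˢ Icc c d)) :
    IntervalIntegrable (fun x => ∫ y in c..d, f x y) volume a b ∧
      ∫ x in a..b, ∫ y in c..d, f x y = ∫ y in c..d, ∫ x in a..b, f x y := by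
  have hint : Integrable (Function.uncurry f)
      ((volume.restrict (Ioc a b)).prod (volume.restrict (Ioc c d))) := by
    rw [Measure.prod_restrict, ← Measure.volume_eq_prod]
    exact (hf.integrableOn_compact (isCompact_Icc.prod isCompact_Icc)).mono_set
      (prod_mono Ioc_subset_Icc_self Ioc_subset_Icc_self)
  simp only [intervalIntegral.integral_of_le hab, intervalIntegral.integral_of_le hcd,
    intervalIntegrable_iff_integrableOn_Ioc_of_le hab]
  exact ⟨hint.integral_prod_left, integral_integral_swap hint⟩

lemma one_sub_add_mul_pos {u y : ℝ} (hy : 0 < y) (hu0 : 0 ≤ u) (hu1 : u ≤ 1) :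
    0 < 1 - u + u * y := by
  nlinarith [mul_nonneg hu0 hy.le]

lemma add_one_sub_mul_pos {u y : ℝ} (hy : 0 < y) (hu0 : 0 ≤ u) (hu1 : u ≤ 1) :
    0 < u + (1 - u) * y := by
  nlinarith [mul_nonneg (sub_nonneg.2 hu1) hy.le]

noncomputable def mixLog (u x : ℝ) : ℝ := log (1 - u + u * x) + log (u + (1 - u) * x) - log x

noncomputable def mixKernel (u y : ℝ) : ℝ :=
  (y ^ 2 - 1) / (y * (1 - u + u * y) * (u + (1 - u) * y))

lemma mixLog_one (u : ℝ) : mixLog u 1 = 0 := by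
  simp [mixLog]

lemma mixLog_inv {u x : ℝ} (hx : 0 < x) (hu0 : 0 ≤ u) (hu1 : u ≤ 1) :
    mixLog u x⁻¹ = mixLog u x := by
  have hp := one_sub_add_mul_pos hx hu0 hu1
  have hq := add_one_sub_mul_pos hx hu0 hu1
  have hinv₁ : 1 - u + u * x⁻¹ = (u + (1 - u) * x) / x := by field_simp; ring
  have hinv₂ : u + (1 - u) * x⁻¹ = (1 - u + u * x) / x := by field_simp; ring
  simp only [mixLog, hinv₁, hinv₂, log_div hq.ne' hx.ne', log_div hp.ne' hx.ne', log_inv]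
  ring

lemma continuousOn_mixKernel :
    ContinuousOn (Function.uncurry mixKernel) (Icc 0 1 ×ˢ Ioi 0) := by
  refine ContinuousOn.div (by fun_prop) (by fun_prop) ?_
  rintro ⟨u, y⟩ ⟨⟨hu0, hu1⟩, hy⟩
  exact (mul_pos (mul_pos hy (one_sub_add_mul_pos hy hu0 hu1))
    (add_one_sub_mul_pos hy hu0 hu1)).ne'

lemma hasDerivAt_mixLog {u x : ℝ} (hx : 0 < x) (hu0 : 0 ≤ u) (hu1 : u ≤ 1) :
    HasDerivAt (mixLog u) (u * (1 - u) * mixKernel u x) x := by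
  have hp := one_sub_add_mul_pos hx hu0 hu1
  have hq := add_one_sub_mul_pos hx hu0 hu1
  have hP : HasDerivAt (fun y => 1 - u + u * y) u x := by
    simpa using ((hasDerivAt_id x).const_mul u).const_add (1 - u)
  have hQ : HasDerivAt (fun y => u + (1 - u) * y) (1 - u) x := by
    simpa using ((hasDerivAt_id x).const_mul (1 - u)).const_add u
  refine (((hP.log hp.ne').add (hQ.log hq.ne')).sub (hasDerivAt_log hx.ne')).congr_deriv ?_
  unfold mixKernel
  field_simp
  ring

lemma hasDerivAt_mixKernel_primitive {u y : ℝ} (hy : 0 < y) (hu0 : 0 ≤ u) (hu1 : u ≤ 1) :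
    HasDerivAt (fun u => (log (1 - u + u * y) - log (u + (1 - u) * y)) / y) (mixKernel u y) u := by
  have hp := one_sub_add_mul_pos hy hu0 hu1
  have hq := add_one_sub_mul_pos hy hu0 hu1
  have hP : HasDerivAt (fun u => 1 - u + u * y) (y - 1) u :=
    (((hasDerivAt_id u).const_sub 1).add ((hasDerivAt_id u).mul_const y)).congr_deriv (by ring)
  have hQ : HasDerivAt (fun u => u + (1 - u) * y) (1 - y) u :=
    ((hasDerivAt_id u).add (((hasDerivAt_id u).const_sub 1).mul_const y)).congr_deriv (by ring)
  refine (((hP.log hp.ne').sub (hQ.log hq.ne')).div_const y).congr_deriv ?_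
  rw [mixKernel, div_sub_div _ _ hp.ne' hq.ne', div_div,
    div_eq_div_iff (by positivity) (by positivity)]
  ring

lemma uIcc_one_subset_Ioi {x : ℝ} (hx : 0 < x) : uIcc 1 x ⊆ Ioi 0 := fun _ hy =>
  lt_of_lt_of_le (lt_min one_pos hx) hy.1

lemma integral_mixKernel_left {y : ℝ} (hy : 0 < y) :
    ∫ u in (0 : ℝ)..1, mixKernel u y = 2 * log y / y := by
  have hcont : ContinuousOn (fun u => mixKernel u y) (uIcc 0 1) := by
    rw [uIcc_of_le zero_le_one]
    exact continuousOn_mixKernel.comp (f := fun u => (u, y)) (by fun_prop) fun u hu => ⟨hu, hy⟩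
  have hderiv : ∀ u ∈ uIcc (0 : ℝ) 1, HasDerivAt
      (fun u => (log (1 - u + u * y) - log (u + (1 - u) * y)) / y) (mixKernel u y) u := by
    intro u hu
    rw [uIcc_of_le zero_le_one] at hu
    exact hasDerivAt_mixKernel_primitive hy hu.1 hu.2
  rw [intervalIntegral.integral_eq_sub_of_hasDerivAt hderiv hcont.intervalIntegrable]
  simp only [sub_self, zero_add, add_zero, one_mul, sub_zero, zero_mul, log_one]
  ring

lemma integral_mixKernel_right {u x : ℝ} (hx : 0 < x) (hu0 : 0 < u) (hu1 : u < 1) :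
    ∫ y in (1 : ℝ)..x, mixKernel u y = mixLog u x / (u * (1 - u)) := by
  have hw : u * (1 - u) ≠ 0 := (mul_pos hu0 (sub_pos.2 hu1)).ne'
  have hcont : ContinuousOn (fun y => mixKernel u y) (uIcc 1 x) :=
    continuousOn_mixKernel.comp (f := fun y => (u, y)) (by fun_prop) fun y hy =>
      ⟨⟨hu0.le, hu1.le⟩, uIcc_one_subset_Ioi hx hy⟩
  have hderiv : ∀ y ∈ uIcc 1 x,
      HasDerivAt (fun y => mixLog u y / (u * (1 - u))) (mixKernel u y) y := fun y hy =>
    ((hasDerivAt_mixLog (uIcc_one_subset_Ioi hx hy) hu0.le hu1.le).div_const _).congr_deriv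
      (mul_div_cancel_left₀ _ hw)
  rw [intervalIntegral.integral_eq_sub_of_hasDerivAt hderiv hcont.intervalIntegrable,
    mixLog_one, zero_div, sub_zero]

lemma integral_two_mul_log_div {x : ℝ} (hx : 0 < x) :
    ∫ y in (1 : ℝ)..x, 2 * log y / y = log x ^ 2 := by
  have hcont : ContinuousOn (fun y => 2 * log y / y) (uIcc 1 x) := fun y hy =>
    have hy₀ := (uIcc_one_subset_Ioi hx hy).ne'
    (((continuousAt_log hy₀).const_mul 2).div continuousAt_id hy₀).continuousWithinAt
  rw [intervalIntegral.integral_eq_sub_of_hasDerivAt (f := fun y => log y ^ 2)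
    (fun y hy => ?_) hcont.intervalIntegrable, log_one]
  · ring
  refine ((hasDerivAt_log (uIcc_one_subset_Ioi hx hy).ne').pow 2).congr_deriv ?_
  simp [div_eq_mul_inv]

lemma sq_log_eq_integral_mixLog_of_one_le {x : ℝ} (hx : 1 ≤ x) :
    IntervalIntegrable (fun u => mixLog u x / (u * (1 - u))) volume 0 1 ∧
      ∫ u in (0 : ℝ)..1, mixLog u x / (u * (1 - u)) = log x ^ 2 := by
  have hx₀ : 0 < x := one_pos.trans_le hx
  obtain ⟨hint, hswap⟩ := intervalIntegral_integral_swap_of_continuousOn zero_le_one hx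
    (continuousOn_mixKernel.mono (prod_mono subset_rfl fun y hy => one_pos.trans_le hy.1))
  have hinner : EqOn (fun u => ∫ y in (1 : ℝ)..x, mixKernel u y)
      (fun u => mixLog u x / (u * (1 - u))) (uIoo 0 1) := by
    intro u hu
    rw [uIoo_of_le zero_le_one] at hu
    exact integral_mixKernel_right hx₀ hu.1 hu.2
  have houter : EqOn (fun y => ∫ u in (0 : ℝ)..1, mixKernel u y) (fun y => 2 * log y / y)
      (uIcc 1 x) := fun y hy => integral_mixKernel_left (uIcc_one_subset_Ioi hx₀ hy)
  refine ⟨hint.congr_uIoo hinner, ?_⟩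
  rw [← intervalIntegral.integral_congr_uIoo hinner, hswap, intervalIntegral.integral_congr houter,
    integral_two_mul_log_div hx₀]

lemma sq_log_eq_integral_mixLog {x : ℝ} (hx : 0 < x) :
    IntervalIntegrable (fun u => mixLog u x / (u * (1 - u))) volume 0 1 ∧
      ∫ u in (0 : ℝ)..1, mixLog u x / (u * (1 - u)) = log x ^ 2 := by
  rcases le_total 1 x with h | h
  · exact sq_log_eq_integral_mixLog_of_one_le h
  have hinv : EqOn (fun u => mixLog u x⁻¹ / (u * (1 - u))) (fun u => mixLog u x / (u * (1 - u)))
      (uIoo 0 1) := by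
    intro u hu
    rw [uIoo_of_le zero_le_one] at hu
    simp only [mixLog_inv hx hu.1.le hu.2.le]
  obtain ⟨hint, hval⟩ := sq_log_eq_integral_mixLog_of_one_le (one_le_inv₀ hx |>.2 h)
  rw [log_inv, neg_sq, intervalIntegral.integral_congr_uIoo hinv] at hval
  exact ⟨hint.congr_uIoo hinv, hval⟩

section Families

variable {ι : Type*} (s : Finset ι) {a b : ι → ℝ}

lemma sum_mixLog (ha : ∀ i ∈ s, 0 < a i) {u : ℝ} (hu0 : 0 ≤ u) (hu1 : u ≤ 1) :
    ∑ i ∈ s, mixLog u (a i) = log (∏ i ∈ s, (1 - u + u * a i)) +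
      log (∏ i ∈ s, (u + (1 - u) * a i)) - log (∏ i ∈ s, a i) := by
  rw [log_prod fun i hi => (one_sub_add_mul_pos (ha i hi) hu0 hu1).ne',
    log_prod fun i hi => (add_one_sub_mul_pos (ha i hi) hu0 hu1).ne',
    log_prod fun i hi => (ha i hi).ne', ← Finset.sum_add_distrib, ← Finset.sum_sub_distrib]
  rfl

lemma sum_mixLog_le (ha : ∀ i ∈ s, 0 < a i) (hb : ∀ i ∈ s, 0 < b i)
    (hprod : ∏ i ∈ s, a i = ∏ i ∈ s, b i)
    (hmix : ∀ u ∈ Ioo (0 : ℝ) 1, ∏ i ∈ s, (1 - u + u * a i) ≤ ∏ i ∈ s, (1 - u + u * b i))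
    {u : ℝ} (hu : u ∈ Ioo (0 : ℝ) 1) :
    ∑ i ∈ s, mixLog u (a i) ≤ ∑ i ∈ s, mixLog u (b i) := by
  obtain ⟨hu0, hu1⟩ := hu
  have hmix' : ∏ i ∈ s, (u + (1 - u) * a i) ≤ ∏ i ∈ s, (u + (1 - u) * b i) := by
    simpa only [sub_sub_cancel] using hmix (1 - u) ⟨sub_pos.2 hu1, sub_lt_self 1 hu0⟩
  rw [sum_mixLog s ha hu0.le hu1.le, sum_mixLog s hb hu0.le hu1.le, hprod]
  gcongr ?_ + ?_ - _
  · exact log_le_log (Finset.prod_pos fun i hi => one_sub_add_mul_pos (ha i hi) hu0.le hu1.le)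
      (hmix u ⟨hu0, hu1⟩)
  · exact log_le_log (Finset.prod_pos fun i hi => add_one_sub_mul_pos (ha i hi) hu0.le hu1.le)
      hmix'

theorem sum_sq_log_le_of_prod_mix_le (ha : ∀ i ∈ s, 0 < a i) (hb : ∀ i ∈ s, 0 < b i)
    (hprod : ∏ i ∈ s, a i = ∏ i ∈ s, b i)
    (hmix : ∀ u ∈ Ioo (0 : ℝ) 1, ∏ i ∈ s, (1 - u + u * a i) ≤ ∏ i ∈ s, (1 - u + u * b i)) :
    ∑ i ∈ s, log (a i) ^ 2 ≤ ∑ i ∈ s, log (b i) ^ 2 := by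
  have hsum : ∀ c : ι → ℝ, (∀ i ∈ s, 0 < c i) → IntervalIntegrable
      (fun u => ∑ i ∈ s, mixLog u (c i) / (u * (1 - u))) volume 0 1 ∧
      ∫ u in (0 : ℝ)..1, ∑ i ∈ s, mixLog u (c i) / (u * (1 - u)) = ∑ i ∈ s, log (c i) ^ 2 := by
    intro c hc
    have hint := fun i hi => (sq_log_eq_integral_mixLog (hc i hi)).1
    refine ⟨by simpa only [Finset.sum_fn] using IntervalIntegrable.sum s hint, ?_⟩
    rw [intervalIntegral.integral_finsetSum hint]
    exact Finset.sum_congr rfl fun i hi => (sq_log_eq_integral_mixLog (hc i hi)).2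
  rw [← (hsum a ha).2, ← (hsum b hb).2]
  refine intervalIntegral.integral_mono_on_of_le_Ioo zero_le_one (hsum a ha).1 (hsum b hb).1
    fun u hu => ?_
  rw [← Finset.sum_div, ← Finset.sum_div]
  exact div_le_div_of_nonneg_right (sum_mixLog_le s ha hb hprod hmix hu)
    (mul_pos hu.1 (sub_pos.2 hu.2)).le

end Families

lemma prod_four_add_mul_le_of_esymm_le {u v a₁ a₂ a₃ a₄ b₁ b₂ b₃ b₄ : ℝ} (hu : 0 ≤ u) (hv : 0 ≤ v)
    (h₁ : a₁ + a₂ + a₃ + a₄ ≤ b₁ + b₂ + b₃ + b₄)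
    (h₂ : a₁ * a₂ + a₁ * a₃ + a₂ * a₃ + a₁ * a₄ + a₂ * a₄ + a₃ * a₄ ≤
      b₁ * b₂ + b₁ * b₃ + b₂ * b₃ + b₁ * b₄ + b₂ * b₄ + b₃ * b₄)
    (h₃ : a₁ * a₂ * a₃ + a₁ * a₂ * a₄ + a₂ * a₃ * a₄ + a₁ * a₃ * a₄ ≤
      b₁ * b₂ * b₃ + b₁ * b₂ * b₄ + b₂ * b₃ * b₄ + b₁ * b₃ * b₄)
    (h₄ : a₁ * a₂ * a₃ * a₄ ≤ b₁ * b₂ * b₃ * b₄) :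
    (v + u * a₁) * (v + u * a₂) * (v + u * a₃) * (v + u * a₄) ≤
      (v + u * b₁) * (v + u * b₂) * (v + u * b₃) * (v + u * b₄) := by
  have expand : ∀ c₁ c₂ c₃ c₄ : ℝ,
      (v + u * c₁) * (v + u * c₂) * (v + u * c₃) * (v + u * c₄) =
        v ^ 4 + v ^ 3 * u * (c₁ + c₂ + c₃ + c₄) +
        v ^ 2 * u ^ 2 * (c₁ * c₂ + c₁ * c₃ + c₂ * c₃ + c₁ * c₄ + c₂ * c₄ + c₃ * c₄) +
        v * u ^ 3 * (c₁ * c₂ * c₃ + c₁ * c₂ * c₄ + c₂ * c₃ * c₄ + c₁ * c₃ * c₄) +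
        u ^ 4 * (c₁ * c₂ * c₃ * c₄) := by
    intros; ring
  rw [expand, expand]
  gcongr

theorem ssli_four (a1 a2 a3 a4 b1 b2 b3 b4 : ℝ)
    (ha1 : 0 < a1) (ha2 : 0 < a2) (ha3 : 0 < a3) (ha4 : 0 < a4)
    (hb1 : 0 < b1) (hb2 : 0 < b2) (hb3 : 0 < b3) (hb4 : 0 < b4)
    (h1 : a1 + a2 + a3 + a4 ≤ b1 + b2 + b3 + b4)
    (h2 : a1 * a2 + a1 * a3 + a2 * a3 + a1 * a4 + a2 * a4 + a3 * a4 ≤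
          b1 * b2 + b1 * b3 + b2 * b3 + b1 * b4 + b2 * b4 + b3 * b4)
    (h3 : a1 * a2 * a3 + a1 * a2 * a4 + a2 * a3 * a4 + a1 * a3 * a4 ≤
          b1 * b2 * b3 + b1 * b2 * b4 + b2 * b3 * b4 + b1 * b3 * b4)
    (h4 : a1 * a2 * a3 * a4 = b1 * b2 * b3 * b4) :
    (log a1) ^ 2 + (log a2) ^ 2 + (log a3) ^ 2 + (log a4) ^ 2 ≤
      (log b1) ^ 2 + (log b2) ^ 2 + (log b3) ^ 2 + (log b4) ^ 2 := by
  have key := sum_sq_log_le_of_prod_mix_le Finset.univ (a := ![a1, a2, a3, a4])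
    (b := ![b1, b2, b3, b4]) ?_ ?_ ?_ ?_
  · simpa [Fin.sum_univ_four] using key
  · simp [Fin.forall_fin_succ, *]
  · simp [Fin.forall_fin_succ, *]
  · simpa [Fin.prod_univ_four] using h4
  · intro u hu
    simpa [Fin.prod_univ_four] using
      prod_four_add_mul_le_of_esymm_le hu.1.le (sub_pos.2 hu.2).le h1 h2 h3 h4.le
end

section
/- Let a, b ∈ ℝ₊ⁿ satisfy b₁/a₁ ≥ b₂/a₂ ≥ … ≥ bₙ/aₙ and a₁b₁ ≥ a₂b₂ ≥ … ≥ aₙbₙ. If additionally ∏ᵢ aᵢ ≤ ∏ᵢ bᵢ and (∏ᵢ aᵢ)·(∏ᵢ bᵢ) ≥ 1, then Σᵢ (log aᵢ)² ≤ Σᵢ (log bᵢ)². -/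
/-!
Put `uᵢ = log (bᵢ / aᵢ)` and `vᵢ = log (aᵢ bᵢ)`. Then `(log bᵢ)² - (log aᵢ)² = uᵢ vᵢ`, both
sequences are antitone, and the two product conditions say `∑ uᵢ ≥ 0` and `∑ vᵢ ≥ 0`.
Chebyshev's sum inequality gives `n ∑ uᵢ vᵢ ≥ (∑ uᵢ)(∑ vᵢ) ≥ 0`.
-/

open Real Finset

theorem MonovaryOn.sum_mul_nonneg {ι α : Type*} [Semiring α] [LinearOrder α]
    [IsStrictOrderedRing α] [ExistsAddOfLE α] {s : Finset ι} {f g : ι → α}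
    (hfg : MonovaryOn f g s) (hf : 0 ≤ ∑ i ∈ s, f i) (hg : 0 ≤ ∑ i ∈ s, g i) :
    0 ≤ ∑ i ∈ s, f i * g i := by
  rcases s.eq_empty_or_nonempty with rfl | hs
  · simp
  have hcard : (0 : α) < #s := by exact_mod_cast hs.card_pos
  exact nonneg_of_mul_nonneg_right
    ((mul_nonneg hf hg).trans hfg.sum_mul_sum_le_card_mul_sum) hcard

theorem Real.sq_log_sub_sq_log {x y : ℝ} (hx : 0 < x) (hy : 0 < y) :
    log y ^ 2 - log x ^ 2 = log (y / x) * log (x * y) := by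
  rw [log_div hy.ne' hx.ne', log_mul hx.ne' hy.ne']
  ring

theorem ssli_quot_prod_condition_a (n : ℕ) (a b : Fin n → ℝ)
    (ha : ∀ i, 0 < a i) (hb : ∀ i, 0 < b i)
    (hquot : ∀ i j : Fin n, i ≤ j → b j / a j ≤ b i / a i)
    (hprod : ∀ i j : Fin n, i ≤ j → a j * b j ≤ a i * b i)
    (h1 : ∏ i, a i ≤ ∏ i, b i)
    (h2 : 1 ≤ (∏ i, a i) * (∏ i, b i)) :
    ∑ i, (log (a i)) ^ 2 ≤ ∑ i, (log (b i)) ^ 2 := by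
  have hpa : 0 < ∏ i, a i := prod_pos fun i _ => ha i
  have hquot_anti : Antitone fun i => log (b i / a i) := fun i j hij =>
    log_le_log (div_pos (hb j) (ha j)) (hquot i j hij)
  have hprod_anti : Antitone fun i => log (a i * b i) := fun i j hij =>
    log_le_log (mul_pos (ha j) (hb j)) (hprod i j hij)
  have hquot_sum : 0 ≤ ∑ i, log (b i / a i) := by
    rw [← log_prod fun i _ => (div_pos (hb i) (ha i)).ne', prod_div_distrib]
    exact log_nonneg ((one_le_div hpa).mpr h1)
  have hprod_sum : 0 ≤ ∑ i, log (a i * b i) := by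
    rw [← log_prod fun i _ => (mul_pos (ha i) (hb i)).ne', prod_mul_distrib]
    exact log_nonneg h2
  rw [← sub_nonneg, ← sum_sub_distrib]
  simp_rw [sq_log_sub_sq_log (ha _) (hb _)]
  exact ((hquot_anti.monovary hprod_anti).monovaryOn _).sum_mul_nonneg hquot_sum hprod_sum
end

section
/- Let a, b ∈ ℝ₊ⁿ satisfy b₁/a₁ ≥ b₂/a₂ ≥ … ≥ bₙ/aₙ and a₁b₁ ≥ a₂b₂ ≥ … ≥ aₙbₙ. If additionally ∏ᵢ aᵢ ≥ ∏ᵢ bᵢ and (∏ᵢ aᵢ)·(∏ᵢ bᵢ) ≤ 1, then Σᵢ (log aᵢ)² ≤ Σᵢ (log bᵢ)². -/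
/-!
Put `x i = log (b i / a i)` and `y i = log (a i * b i)`. Both sequences are antitone, so Chebyshev's
sum inequality gives `(∑ x) (∑ y) ≤ n ∑ x y`. The product conditions say exactly that `∑ x ≤ 0`
and `∑ y ≤ 0`, so the left side is nonnegative, whence `∑ x y ≥ 0`. Finally
`x i * y i = (log b i)² - (log a i)²`.
-/

open Real Finset

theorem Monovary.sum_mul_nonneg_of_sum_nonpos {ι α : Type*} [Fintype ι] [CommRing α]
    [LinearOrder α] [IsStrictOrderedRing α] {f g : ι → α} (hfg : Monovary f g)
    (hf : ∑ i, f i ≤ 0) (hg : ∑ i, g i ≤ 0) : 0 ≤ ∑ i, f i * g i := by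
  rcases isEmpty_or_nonempty ι with hι | hι
  · simp
  · have hcard : (0 : α) < Fintype.card ι := by exact_mod_cast Fintype.card_pos
    exact nonneg_of_mul_nonneg_right
      ((mul_nonneg_of_nonpos_of_nonpos hf hg).trans hfg.sum_mul_sum_le_card_mul_sum) hcard

theorem Real.antitone_log_comp {ι : Type*} [Preorder ι] {f : ι → ℝ} (hf : Antitone f)
    (hpos : ∀ i, 0 < f i) : Antitone fun i => log (f i) :=
  fun _ _ hij => log_le_log (hpos _) (hf hij)

theorem Real.log_div_mul_log_mul {a b : ℝ} (ha : a ≠ 0) (hb : b ≠ 0) :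
    log (b / a) * log (a * b) = log b ^ 2 - log a ^ 2 := by
  rw [log_div hb ha, log_mul ha hb]
  ring

theorem ssli_quot_prod_condition_b (n : ℕ) (a b : Fin n → ℝ)
    (ha : ∀ i, 0 < a i) (hb : ∀ i, 0 < b i)
    (hquot : ∀ i j : Fin n, i ≤ j → b j / a j ≤ b i / a i)
    (hprod : ∀ i j : Fin n, i ≤ j → a j * b j ≤ a i * b i)
    (h1 : ∏ i, b i ≤ ∏ i, a i)
    (h2 : (∏ i, a i) * (∏ i, b i) ≤ 1) :
    ∑ i, (log (a i)) ^ 2 ≤ ∑ i, (log (b i)) ^ 2 := by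
  have hpa : 0 < ∏ i, a i := prod_pos fun i _ => ha i
  have hpb : 0 < ∏ i, b i := prod_pos fun i _ => hb i
  have hx : Antitone fun i => log (b i / a i) :=
    antitone_log_comp (fun i j => hquot i j) fun i => div_pos (hb i) (ha i)
  have hy : Antitone fun i => log (a i * b i) :=
    antitone_log_comp (fun i j => hprod i j) fun i => mul_pos (ha i) (hb i)
  have hsx : ∑ i, log (b i / a i) ≤ 0 := by
    rw [← log_prod fun i _ => (div_pos (hb i) (ha i)).ne', prod_div_distrib]
    exact log_nonpos (div_pos hpb hpa).le ((div_le_one hpa).2 h1)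
  have hsy : ∑ i, log (a i * b i) ≤ 0 := by
    rw [← log_prod fun i _ => (mul_pos (ha i) (hb i)).ne', prod_mul_distrib]
    exact log_nonpos (mul_pos hpa hpb).le h2
  have key := (hx.monovary hy).sum_mul_nonneg_of_sum_nonpos hsx hsy
  simp_rw [log_div_mul_log_mul (ha _).ne' (hb _).ne', sum_sub_distrib, sub_nonneg] at key
  exact key
end

section
/- Let a, b ∈ ℝⁿ with aᵢ > 1 and bᵢ > 1 for all i, and let p < 0 be a real number. Suppose a is weakly majorized from above by b, i.e., for every k ∈ {1,…,n}, the sum of the k smallest entries of a is at least the sum of the k smallest entries of b. Then Σᵢ (log aᵢ)ᵖ ≤ Σᵢ (log bᵢ)ᵖ. -/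
open Real Finset

/-!
For `p ≤ 0` the function `f t = (log t) ^ p` is convex and decreasing on `(1, ∞)`, being a convex
decreasing function of the concave function `log`. Sort `a` and `b` increasingly: the hypothesis
then says that every prefix sum of the sorted `a` dominates the corresponding one of the sorted `b`.
The tangent lines of `f` give `f (aᵢ) - f (bᵢ) ≤ cᵢ (aᵢ - bᵢ)` with slopes `cᵢ ≤ 0` increasing
in `i`, and Abel summation against the nonnegative prefix sums of `a - b` makes the total
nonpositive (the Tomić–Weyl inequality). Right derivatives serve as slopes, so no
differentiability is needed.
-/

theorem sum_mul_le_mul_sum_of_monotoneOn {ι : Type*} [LinearOrder ι] {c d : ι → ℝ} {γ : ℝ}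
    (s : Finset ι) (hc : MonotoneOn c s) (hcγ : ∀ i ∈ s, c i ≤ γ)
    (hd : ∀ j ∈ s, 0 ≤ ∑ i ∈ s with i ≤ j, d i) :
    ∑ i ∈ s, c i * d i ≤ γ * ∑ i ∈ s, d i := by
  induction s using Finset.induction_on_max generalizing γ with
  | empty => simp
  | insert m s hlt ih =>
    have hms : m ∉ s := fun h ↦ lt_irrefl m (hlt m h)
    have hprefix : ∀ j ∈ s, {i ∈ insert m s | i ≤ j} = {i ∈ s | i ≤ j} := fun j hj ↦ by
      rw [filter_insert, if_neg (hlt j hj).not_ge]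
    have htotal : {i ∈ insert m s | i ≤ m} = insert m s :=
      filter_true_of_mem fun i hi ↦ (mem_insert.1 hi).elim le_of_eq fun h ↦ (hlt i h).le
    have hcm : ∑ i ∈ s, c i * d i ≤ c m * ∑ i ∈ s, d i :=
      ih (hc.mono (subset_insert m s))
        (fun i hi ↦ hc (mem_insert_of_mem hi) (mem_insert_self m s) (hlt i hi).le)
        fun j hj ↦ hprefix j hj ▸ hd j (mem_insert_of_mem hj)
    have hsum : 0 ≤ ∑ i ∈ insert m s, d i := htotal ▸ hd m (mem_insert_self m s)
    rw [sum_insert hms] at hsum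
    rw [sum_insert hms, sum_insert hms]
    calc c m * d m + ∑ i ∈ s, c i * d i ≤ c m * (d m + ∑ i ∈ s, d i) := by
          rw [mul_add]; gcongr
      _ ≤ γ * (d m + ∑ i ∈ s, d i) :=
          mul_le_mul_of_nonneg_right (hcγ m (mem_insert_self m s)) hsum

theorem sum_le_sum_of_card_eq {ι : Type*} [DecidableEq ι] {s t : Finset ι} {g : ι → ℝ}
    (hst : #s = #t) (hg : ∀ i ∈ s \ t, ∀ j ∈ t \ s, g i ≤ g j) :
    ∑ i ∈ s, g i ≤ ∑ i ∈ t, g i := by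
  let e := Finset.equivOfCardEq (card_sdiff_comm hst)
  rw [← sum_inter_add_sum_sdiff s t, ← sum_inter_add_sum_sdiff t s, inter_comm]
  refine add_le_add le_rfl ?_
  calc ∑ i ∈ s \ t, g i = ∑ i : ↥(s \ t), g i := (sum_coe_sort _ _).symm
    _ ≤ ∑ i : ↥(s \ t), g (e i) := sum_le_sum fun i _ ↦ hg _ i.2 _ (e i).2
    _ = ∑ j ∈ t \ s, g j := (e.sum_comp fun j ↦ g j).trans (sum_coe_sort _ _)

theorem Monotone.sum_filter_le_le_sum {ι : Type*} [LinearOrder ι] [Fintype ι] {g : ι → ℝ}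
    (hg : Monotone g) (j : ι) {C : Finset ι} (hC : #C = #{i | i ≤ j}) :
    ∑ i with i ≤ j, g i ≤ ∑ i ∈ C, g i :=
  sum_le_sum_of_card_eq hC.symm fun i hi k hk ↦ by
    simp only [mem_sdiff, mem_filter_univ] at hi hk
    exact hg (hi.1.trans (not_le.1 hk.2).le)

theorem ConvexOn.rightDeriv_mul_sub_le {S : Set ℝ} {f : ℝ → ℝ} {x y : ℝ} (hf : ConvexOn ℝ S f)
    (hx : x ∈ interior S) (hy : y ∈ S) :
    derivWithin f (Set.Ioi x) x * (y - x) ≤ f y - f x := by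
  rcases lt_trichotomy x y with hxy | rfl | hyx
  · have := hf.rightDeriv_le_slope_of_mem_interior hx hy hxy
    rwa [slope_def_field, le_div_iff₀ (sub_pos.2 hxy)] at this
  · simp
  · have := (hf.slope_le_leftDeriv_of_mem_interior hy hx hyx).trans
      (hf.leftDeriv_le_rightDeriv_of_mem_interior hx)
    rw [slope_def_field, div_le_iff₀ (sub_pos.2 hyx)] at this
    linarith

theorem AntitoneOn.rightDeriv_nonpos {S : Set ℝ} {f : ℝ → ℝ} {x : ℝ} (hf : AntitoneOn f S)
    (hx : x ∈ interior S) : derivWithin f (Set.Ioi x) x ≤ 0 := by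
  rw [← derivWithin_inter (mem_interior_iff_mem_nhds.1 hx)]
  exact (hf.mono Set.inter_subset_right).derivWithin_nonpos

theorem ConvexOn.sum_le_sum_of_sum_filter_le {ι : Type*} [LinearOrder ι] {S : Set ℝ}
    {f : ℝ → ℝ} (hf : ConvexOn ℝ S f) (hf_anti : AntitoneOn f S) {s : Finset ι} {x y : ι → ℝ}
    (hx : ∀ i ∈ s, x i ∈ interior S) (hy : ∀ i ∈ s, y i ∈ S) (hx_mono : MonotoneOn x s)
    (hxy : ∀ j ∈ s, ∑ i ∈ s with i ≤ j, y i ≤ ∑ i ∈ s with i ≤ j, x i) :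
    ∑ i ∈ s, f (x i) ≤ ∑ i ∈ s, f (y i) := by
  set c : ι → ℝ := fun i ↦ derivWithin f (Set.Ioi (x i)) (x i)
  have htangent : ∀ i ∈ s, f (x i) - f (y i) ≤ c i * (x i - y i) := fun i hi ↦ by
    have := hf.rightDeriv_mul_sub_le (hx i hi) (hy i hi)
    linarith
  have hc : MonotoneOn c s := fun i hi j hj hij ↦
    hf.monotoneOn_rightDeriv (hx i hi) (hx j hj) (hx_mono hi hj hij)
  have hc_nonpos : ∀ i ∈ s, c i ≤ 0 := fun i hi ↦ hf_anti.rightDeriv_nonpos (hx i hi)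
  have hd : ∀ j ∈ s, 0 ≤ ∑ i ∈ s with i ≤ j, (x i - y i) := fun j hj ↦ by
    rw [sum_sub_distrib, sub_nonneg]; exact hxy j hj
  have := (sum_le_sum htangent).trans
    ((sum_mul_le_mul_sum_of_monotoneOn s hc hc_nonpos hd).trans_eq (zero_mul _))
  rwa [sum_sub_distrib, sub_nonpos] at this

section LogRpow

variable {p : ℝ}

theorem convexOn_rpow_of_nonpos (hp : p ≤ 0) : ConvexOn ℝ (Set.Ioi 0) fun x : ℝ ↦ x ^ p := by
  refine ⟨convex_Ioi 0, fun x (hx : 0 < x) y (hy : 0 < y) a b ha hb hab ↦ ?_⟩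
  simp only [smul_eq_mul]
  calc (a * x + b * y) ^ p ≤ (x ^ a * y ^ b) ^ p :=
        rpow_le_rpow_of_nonpos (by positivity)
          (geom_mean_le_arith_mean2_weighted ha hb hx.le hy.le hab) hp
    _ = (x ^ p) ^ a * (y ^ p) ^ b := by
        rw [mul_rpow (by positivity) (by positivity), ← rpow_mul hx.le, ← rpow_mul hy.le,
          ← rpow_mul hx.le, ← rpow_mul hy.le, mul_comm a, mul_comm b]
    _ ≤ a * x ^ p + b * y ^ p :=
        geom_mean_le_arith_mean2_weighted ha hb (by positivity) (by positivity) hab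

theorem antitoneOn_rpow_of_nonpos (hp : p ≤ 0) : AntitoneOn (fun x : ℝ ↦ x ^ p) (Set.Ioi 0) :=
  fun _ hx _ _ hxy ↦ rpow_le_rpow_of_nonpos hx hxy hp

theorem convexOn_log_rpow (hp : p ≤ 0) : ConvexOn ℝ (Set.Ioi 1) fun x ↦ log x ^ p := by
  have himage : log '' Set.Ioi 1 = Set.Ioi 0 := by rw [image_log_Ioi one_pos, log_one]
  refine (convexOn_rpow_of_nonpos hp).subset himage.subset ?_ |>.comp_concaveOn
    (strictConcaveOn_log_Ioi.concaveOn.subset (Set.Ioi_subset_Ioi zero_le_one) (convex_Ioi 1))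
    ((antitoneOn_rpow_of_nonpos hp).mono himage.subset)
  rw [himage]; exact convex_Ioi 0

theorem antitoneOn_log_rpow (hp : p ≤ 0) : AntitoneOn (fun x ↦ log x ^ p) (Set.Ioi 1) :=
  fun _ hx _ _ hxy ↦ antitoneOn_rpow_of_nonpos hp (log_pos hx) (log_pos (hx.trans_le hxy))
    (log_le_log (one_pos.trans hx) hxy)

end LogRpow

theorem sum_filter_le_comp_sort_le {n : ℕ} {a b : Fin n → ℝ}
    (hmaj : ∀ A : Finset (Fin n), ∃ B : Finset (Fin n),
      B.card = A.card ∧ ∑ i ∈ B, b i ≤ ∑ i ∈ A, a i) (j : Fin n) :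
    ∑ i with i ≤ j, b (Tuple.sort b i) ≤ ∑ i with i ≤ j, a (Tuple.sort a i) := by
  obtain ⟨B, hB_card, hB_sum⟩ :=
    hmaj (({i | i ≤ j} : Finset (Fin n)).map (Tuple.sort a).toEmbedding)
  calc ∑ i with i ≤ j, b (Tuple.sort b i)
      ≤ ∑ i ∈ B.map (Tuple.sort b).symm.toEmbedding, b (Tuple.sort b i) :=
        (Tuple.monotone_sort b).sum_filter_le_le_sum j (by simpa using hB_card)
    _ = ∑ i ∈ B, b i := by simp [sum_map]
    _ ≤ ∑ i ∈ ({i | i ≤ j} : Finset (Fin n)).map (Tuple.sort a).toEmbedding, a i := hB_sum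
    _ = ∑ i with i ≤ j, a (Tuple.sort a i) := sum_map _ _ _

/-- Sum of powered logarithms inequality: if `a` is weakly majorized from above
by `b` (equivalently: for every subset `A` of indices there is a subset `B` of the
same cardinality such that `∑_{B} b ≤ ∑_{A} a`, which amounts to the sums of the
`k` smallest entries of `a` dominating those of `b` for every `k`), and all entries
exceed `1`, then for every negative real power `p` we have
`∑ (log aᵢ)ᵖ ≤ ∑ (log bᵢ)ᵖ`. -/
theorem sum_of_powered_logarithms (n : ℕ) (a b : Fin n → ℝ)
    (ha : ∀ i, 1 < a i) (hb : ∀ i, 1 < b i) (p : ℝ) (hp : p < 0)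
    (hmaj : ∀ A : Finset (Fin n), ∃ B : Finset (Fin n),
      B.card = A.card ∧ ∑ i ∈ B, b i ≤ ∑ i ∈ A, a i) :
    ∑ i, (log (a i)) ^ p ≤ ∑ i, (log (b i)) ^ p := by
  calc ∑ i, log (a i) ^ p = ∑ i, log (a (Tuple.sort a i)) ^ p :=
        (Equiv.sum_comp (Tuple.sort a) fun i ↦ log (a i) ^ p).symm
    _ ≤ ∑ i, log (b (Tuple.sort b i)) ^ p :=
        (convexOn_log_rpow hp.le).sum_le_sum_of_sum_filter_le (antitoneOn_log_rpow hp.le)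
          (x := a ∘ Tuple.sort a) (y := b ∘ Tuple.sort b)
          (fun i _ ↦ by rw [interior_Ioi]; exact ha _) (fun i _ ↦ hb _)
          ((Tuple.monotone_sort a).monotoneOn _) fun j _ ↦ sum_filter_le_comp_sort_le hmaj j
    _ = ∑ i, log (b i) ^ p := Equiv.sum_comp (Tuple.sort b) fun i ↦ log (b i) ^ p
end

section
/- For positive reals x, y ∈ ℝ₊ⁿ, if log x is weakly majorized from below by log y (i.e. the products of the k largest entries of x are bounded by those of y for all k), then x is weakly majorized from below by y (i.e. the sums of the k largest entries of x are bounded by those of y for all k). -/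
/-!
Sort the entries of `x` on `A` as `a₀ ≥ … ≥ a_{k-1}` and let `b₀ ≥ … ≥ b_{k-1}` be the `k`
largest entries of `y`. The hypothesis gives `∏_{i<j} aᵢ ≤ ∏_{i<j} bᵢ` for every `j`, i.e. the
partial sums of `dᵢ = log aᵢ - log bᵢ` are nonpositive. The tangent-line bound
`aᵢ - bᵢ ≤ aᵢ dᵢ` and Abel summation against the decreasing nonnegative weights `aᵢ` then give
`∑ (aᵢ - bᵢ) ≤ ∑ aᵢ dᵢ ≤ 0`.
-/

open Real Finset

theorem Real.sub_le_mul_sub_log {a b : ℝ} (ha : 0 < a) (hb : 0 < b) :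
    a - b ≤ a * (log a - log b) := by
  have h := mul_le_mul_of_nonneg_left (log_le_sub_one_of_pos (div_pos hb ha)) ha.le
  rw [log_div hb.ne' ha.ne', mul_sub, mul_sub, mul_div_cancel₀ _ ha.ne'] at h
  linarith

theorem Finset.sum_range_mul_nonpos_of_antitoneOn {R : Type*} [Ring R] [LinearOrder R]
    [IsOrderedRing R] {c d : ℕ → R} {k : ℕ} (hc : AntitoneOn c (Set.Iio k))
    (hc₀ : ∀ i < k, 0 ≤ c i) (hd : ∀ j ≤ k, ∑ i ∈ range j, d i ≤ 0) :
    ∑ i ∈ range k, c i * d i ≤ 0 := by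
  rcases k.eq_zero_or_pos with rfl | hk
  · simp
  have hlast : c (k - 1) * ∑ i ∈ range k, d i ≤ 0 :=
    mul_nonpos_of_nonneg_of_nonpos (hc₀ _ (Nat.sub_lt hk one_pos)) (hd k le_rfl)
  have hsteps : 0 ≤ ∑ i ∈ range (k - 1), (c (i + 1) - c i) * ∑ l ∈ range (i + 1), d l := by
    refine sum_nonneg fun i hi => mul_nonneg_of_nonpos_of_nonpos ?_ (hd _ (by grind))
    exact sub_nonpos.2 (hc (by grind) (by grind) (Nat.le_succ i))
  have hparts := sum_range_by_parts c d k
  simp only [smul_eq_mul] at hparts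
  rw [hparts]
  exact sub_nonpos_of_le (hlast.trans hsteps)

theorem sum_range_le_sum_range_of_prod_range_le {a b : ℕ → ℝ} {k : ℕ}
    (ha : ∀ i < k, 0 < a i) (hb : ∀ i < k, 0 < b i) (hanti : AntitoneOn a (Set.Iio k))
    (hprod : ∀ j ≤ k, ∏ i ∈ range j, a i ≤ ∏ i ∈ range j, b i) :
    ∑ i ∈ range k, a i ≤ ∑ i ∈ range k, b i := by
  have hlog : ∀ j ≤ k, ∑ i ∈ range j, (log (a i) - log (b i)) ≤ 0 := by
    intro j hj
    have hlt : ∀ i ∈ range j, i < k := fun i hi => (mem_range.1 hi).trans_le hj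
    rw [sum_sub_distrib, ← log_prod fun i hi => (ha i (hlt i hi)).ne',
      ← log_prod fun i hi => (hb i (hlt i hi)).ne', sub_nonpos]
    exact log_le_log (prod_pos fun i hi => ha i (hlt i hi)) (hprod j hj)
  rw [← sub_nonpos, ← sum_sub_distrib]
  calc ∑ i ∈ range k, (a i - b i)
      ≤ ∑ i ∈ range k, a i * (log (a i) - log (b i)) := by
        gcongr with i hi
        exact sub_le_mul_sub_log (ha i (mem_range.1 hi)) (hb i (mem_range.1 hi))
    _ ≤ 0 := sum_range_mul_nonpos_of_antitoneOn hanti (fun i hi => (ha i hi).le) hlog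

section Enumeration

variable {ι α : Type*}

theorem Finset.prod_le_prod_of_card_eq_of_forall_le {R : Type*} [CommMonoidWithZero R]
    [PartialOrder R] [ZeroLEOneClass R] [PosMulMono R] {w : ι → R} {S T : Finset ι}
    (hw : ∀ i ∈ S, 0 ≤ w i) (hcard : #S = #T) (hle : ∀ i ∈ S, i ∉ T → ∀ j ∈ T, w i ≤ w j) :
    ∏ i ∈ S, w i ≤ ∏ i ∈ T, w i := by
  classical
  have hsdiff : ∏ i ∈ S \ T, w i ≤ ∏ i ∈ T \ S, w i := by
    let e := equivOfCardEq (card_sdiff_comm hcard)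
    rw [← prod_coe_sort (S \ T), ← prod_coe_sort (T \ S), ← e.prod_comp]
    refine prod_le_prod (fun i _ => hw i (mem_sdiff.1 i.2).1) fun i _ => ?_
    exact hle i (mem_sdiff.1 i.2).1 (mem_sdiff.1 i.2).2 _ (mem_sdiff.1 (e i).2).1
  rw [← prod_inter_mul_prod_sdiff S T, ← prod_inter_mul_prod_sdiff T S, inter_comm]
  exact mul_le_mul_of_nonneg_left hsdiff (prod_nonneg fun i hi => hw i (mem_inter.1 hi).2)

variable [LinearOrder α]

/-- `e 0, …, e (#s - 1)` lists the elements of `s` in order of decreasing `w`; the values of `e`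
from `#s` on are irrelevant. -/
structure Finset.IsAntitoneEnumeration (s : Finset ι) (w : ι → α) (e : ℕ → ι) : Prop where
  bijOn : Set.BijOn e (Set.Iio #s) s
  antitoneOn : AntitoneOn (w ∘ e) (Set.Iio #s)

theorem Finset.exists_isAntitoneEnumeration [Nonempty ι] (s : Finset ι) (w : ι → α) :
    ∃ e, s.IsAntitoneEnumeration w e := by
  let g : Fin #s → ι := fun i => s.equivFin.symm i
  let σ := Tuple.sort (OrderDual.toDual ∘ w ∘ g)
  have hσ : Monotone ((OrderDual.toDual ∘ w ∘ g) ∘ σ) := Tuple.monotone_sort _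
  let e : ℕ → ι := fun i => if h : i < #s then g (σ ⟨i, h⟩) else Classical.arbitrary ι
  have he : ∀ i (h : i < #s), e i = g (σ ⟨i, h⟩) := fun i h => dif_pos h
  have hmaps : Set.MapsTo e (range #s) s := fun i hi => by
    rw [he i (mem_range.1 hi)]
    exact coe_mem _
  have hinj : Set.InjOn e (range #s) := fun i hi j hj hij => by
    rw [he i (mem_range.1 hi), he j (mem_range.1 hj)] at hij
    simpa using σ.injective (s.equivFin.symm.injective (Subtype.val_injective hij))
  have hsurj := surjOn_of_injOn_of_card_le e hmaps hinj (card_range _).ge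
  rw [coe_range] at hmaps hinj hsurj
  refine ⟨e, ⟨hmaps, hinj, hsurj⟩, fun i hi j hj hij => ?_⟩
  simp only [Function.comp_apply, he i hi, he j hj]
  exact hσ (Fin.mk_le_mk.2 hij)

namespace Finset.IsAntitoneEnumeration

variable {s : Finset ι} {w : ι → α} {e : ℕ → ι}

theorem image_range [DecidableEq ι] (he : s.IsAntitoneEnumeration w e) :
    (range #s).image e = s := by
  rw [← coe_inj, coe_image, coe_range, he.bijOn.image_eq]

theorem injOn_range (he : s.IsAntitoneEnumeration w e) {j : ℕ} (hj : j ≤ #s) :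
    Set.InjOn e (range j) := by
  rw [coe_range]
  exact he.bijOn.injOn.mono (Set.Iio_subset_Iio hj)

theorem card_image_range [DecidableEq ι] (he : s.IsAntitoneEnumeration w e) {j : ℕ}
    (hj : j ≤ #s) : #((range j).image e) = j := by
  rw [card_image_of_injOn (he.injOn_range hj), card_range]

@[to_additive]
theorem prod_image_range [DecidableEq ι] {M : Type*} [CommMonoid M] (f : ι → M)
    (he : s.IsAntitoneEnumeration w e) {j : ℕ} (hj : j ≤ #s) :
    ∏ i ∈ (range j).image e, f i = ∏ i ∈ range j, f (e i) :=
  prod_image (he.injOn_range hj)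

theorem le_of_notMem_image_range [DecidableEq ι] (he : s.IsAntitoneEnumeration w e) {j : ℕ}
    {i t : ι} (hi : i ∈ s) (hij : i ∉ (range j).image e) (ht : t ∈ (range j).image e) :
    w i ≤ w t := by
  obtain ⟨p, hp, rfl⟩ := he.bijOn.surjOn hi
  obtain ⟨q, hq, rfl⟩ := mem_image.1 ht
  have hjp : j ≤ p := not_lt.1 fun hpj => hij (mem_image_of_mem e (mem_range.2 hpj))
  exact he.antitoneOn (by grind) hp (by grind)

end Finset.IsAntitoneEnumeration

end Enumeration

/-- Logarithmic weak majorization implies weak majorization: if for every subset `A`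
of indices there is a subset `B` of the same cardinality with `∏_{A} x ≤ ∏_{B} y`
(i.e. the products of the `k` largest entries of `x` are bounded by those of `y`),
then for every subset `A` there is a subset `B` of the same cardinality with
`∑_{A} x ≤ ∑_{B} y` (i.e. the sums of the `k` largest entries of `x` are bounded by
those of `y`). -/
theorem weak_majorization_of_log_weak_majorization (n : ℕ) (x y : Fin n → ℝ)
    (hx : ∀ i, 0 < x i) (hy : ∀ i, 0 < y i)
    (hmaj : ∀ A : Finset (Fin n), ∃ B : Finset (Fin n),
      B.card = A.card ∧ ∏ i ∈ A, x i ≤ ∏ i ∈ B, y i) :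
    ∀ A : Finset (Fin n), ∃ B : Finset (Fin n),
      B.card = A.card ∧ ∑ i ∈ A, x i ≤ ∑ i ∈ B, y i := by
  intro A
  rcases A.eq_empty_or_nonempty with rfl | ⟨i₀, -⟩
  · exact ⟨∅, rfl, by simp⟩
  have : Nonempty (Fin n) := ⟨i₀⟩
  obtain ⟨ex, hex⟩ := A.exists_isAntitoneEnumeration x
  obtain ⟨ey, hey⟩ := (univ : Finset (Fin n)).exists_isAntitoneEnumeration y
  have hAn : #A ≤ #(univ : Finset (Fin n)) := card_le_univ A
  have hprod : ∀ j ≤ #A, ∏ i ∈ range j, x (ex i) ≤ ∏ i ∈ range j, y (ey i) := by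
    intro j hj
    obtain ⟨B, hBcard, hB⟩ := hmaj ((range j).image ex)
    rw [← hex.prod_image_range x hj, ← hey.prod_image_range y (hj.trans hAn)]
    refine hB.trans (prod_le_prod_of_card_eq_of_forall_le (fun i _ => (hy i).le) ?_
      fun i _ hi t ht => hey.le_of_notMem_image_range (mem_univ i) hi ht)
    rw [hBcard, hex.card_image_range hj, hey.card_image_range (hj.trans hAn)]
  refine ⟨(range #A).image ey, hey.card_image_range hAn, ?_⟩
  calc ∑ i ∈ A, x i = ∑ i ∈ range #A, x (ex i) := by
        rw [← hex.sum_image_range x le_rfl, hex.image_range]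
    _ ≤ ∑ i ∈ range #A, y (ey i) :=
        sum_range_le_sum_range_of_prod_range_le (fun i _ => hx _) (fun i _ => hy _)
          hex.antitoneOn hprod
    _ = ∑ i ∈ (range #A).image ey, y i := (hey.sum_image_range y hAn).symm
end

section
/- For x, y ∈ ℝ₊ⁿ with x majorized by y (x ≺ y), one has e_k(x) ≥ e_k(y) for every k ∈ {1,…,n}, where e_k denotes the k-th elementary symmetric polynomial. -/
/-!
Sort `x` and `y` decreasingly. Against a decreasing `x`, it suffices that every prefix sum of `x`
is at most the corresponding prefix sum of `y` (in `y`'s own order), with equal totals.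
While `x ≠ y`, take the first `k` with `y k < x k` and an earlier `j` with `x j < y j`, and move
`δ = min (y j - x j) (x k - y k)` from `y j` to `y k`. This keeps the prefix condition, makes one
more coordinate agree with `x`, and does not decrease any `e_m(y)`: the sum `y j + y k` is fixed
while the product `y j * y k` grows, since `y j - δ ≥ x j ≥ x k ≥ y k + δ`.
-/

open Real

/-- The `k`-th elementary symmetric polynomial of `x : Fin n → ℝ`. -/
def esymm (n k : ℕ) (x : Fin n → ℝ) : ℝ :=
  ∑ A ∈ Finset.powersetCard k (Finset.univ : Finset (Fin n)), ∏ i ∈ A, x i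

open Finset

namespace Multiset

variable {R : Type*} [CommSemiring R]

@[simp]
theorem esymm_zero (s : Multiset R) : s.esymm 0 = 1 := by
  simp [esymm]

theorem esymm_cons_succ (a : R) (s : Multiset R) (k : ℕ) :
    (a ::ₘ s).esymm (k + 1) = s.esymm (k + 1) + a * s.esymm k := by
  simp [esymm, powersetCard_cons, map_map, prod_cons, sum_map_mul_left]

variable [PartialOrder R] [IsOrderedRing R]

theorem esymm_nonneg {s : Multiset R} (hs : ∀ a ∈ s, 0 ≤ a) (k : ℕ) : 0 ≤ s.esymm k := by
  refine sum_nonneg fun p hp => ?_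
  obtain ⟨t, ht, rfl⟩ := mem_map.1 hp
  exact prod_nonneg fun a ha => hs a (mem_of_le (mem_powersetCard.1 ht).1 ha)

theorem esymm_cons_cons_le {s : Multiset R} (hs : ∀ a ∈ s, 0 ≤ a) {a b c d : R}
    (hsum : a + b = c + d) (hprod : a * b ≤ c * d) (k : ℕ) :
    (a ::ₘ b ::ₘ s).esymm k ≤ (c ::ₘ d ::ₘ s).esymm k := by
  rcases k with _ | _ | k
  · simp
  · simp only [esymm_cons_succ, esymm_zero, mul_one, add_assoc, add_comm b, hsum,
      add_comm d, le_refl]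
  · have hk := esymm_nonneg hs k
    simp only [esymm_cons_succ]
    calc s.esymm (k + 2) + b * s.esymm (k + 1) + a * (s.esymm (k + 1) + b * s.esymm k)
        = s.esymm (k + 2) + (a + b) * s.esymm (k + 1) + a * b * s.esymm k := by ring
      _ ≤ s.esymm (k + 2) + (c + d) * s.esymm (k + 1) + c * d * s.esymm k := by
        rw [hsum]; gcongr
      _ = _ := by ring

end Multiset

theorem Antitone.sum_le_sum_Iic {ι M : Type*} [LinearOrder ι] [LocallyFiniteOrderBot ι]
    [AddCommMonoid M] [PartialOrder M] [IsOrderedAddMonoid M] {u : ι → M} (hu : Antitone u)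
    {s : Finset ι} {i : ι} (hs : #s = #(Iic i)) : ∑ j ∈ s, u j ≤ ∑ j ∈ Iic i, u j := by
  have hout : ∑ j ∈ s \ Iic i, u j ≤ ∑ j ∈ Iic i \ s, u j :=
    calc ∑ j ∈ s \ Iic i, u j
        ≤ #(s \ Iic i) • u i := sum_le_card_nsmul _ _ _ fun j hj =>
          hu (not_le.1 (mem_Iic.not.1 (mem_sdiff.1 hj).2)).le
      _ = #(Iic i \ s) • u i := by rw [card_sdiff_comm hs]
      _ ≤ ∑ j ∈ Iic i \ s, u j := card_nsmul_le_sum _ _ _ fun j hj =>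
          hu (mem_Iic.1 (mem_sdiff.1 hj).1)
  rw [← sum_inter_add_sum_sdiff s (Iic i), ← sum_inter_add_sum_sdiff (Iic i) s, inter_comm]
  gcongr

theorem exists_perm_antitone_comp {α : Type*} [LinearOrder α] {n : ℕ} (f : Fin n → α) :
    ∃ σ : Equiv.Perm (Fin n), Antitone (f ∘ σ) :=
  ⟨Tuple.sort (OrderDual.toDual ∘ f), Tuple.monotone_sort (OrderDual.toDual ∘ f)⟩

theorem Finset.univ_val_eq_cons_cons {ι : Type*} [Fintype ι] [DecidableEq ι] {j k : ι} (hjk : j ≠ k) :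
    (univ : Finset ι).val = j ::ₘ k ::ₘ (univ.val.erase j).erase k := by
  rw [Multiset.cons_erase (Multiset.mem_erase_of_ne hjk.symm |>.2 (mem_univ_val k)),
    Multiset.cons_erase (mem_univ_val j)]

variable {n : ℕ}

theorem esymm_eq_esymm_map_univ_val (k : ℕ) (u : Fin n → ℝ) :
    esymm n k u = (univ.val.map u).esymm k :=
  (esymm_map_val u univ k).symm

theorem esymm_comp_perm (σ : Equiv.Perm (Fin n)) (k : ℕ) (u : Fin n → ℝ) :
    esymm n k (u ∘ σ) = esymm n k u := by
  rw [esymm_eq_esymm_map_univ_val, esymm_eq_esymm_map_univ_val, ← Multiset.map_map,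
    Multiset.map_univ_val_equiv]

theorem esymm_le_esymm_of_transfer {u v : Fin n → ℝ} {j k : Fin n} (hjk : j ≠ k)
    (hu : ∀ i, 0 ≤ u i) (hoff : ∀ i, i ≠ j → i ≠ k → u i = v i)
    (hsum : u j + u k = v j + v k) (hprod : u j * u k ≤ v j * v k) (m : ℕ) :
    esymm n m u ≤ esymm n m v := by
  set r := (univ.val.erase j).erase k
  have hr : r.map u = r.map v := Multiset.map_congr rfl fun i hi => by
    rw [(univ.nodup.erase j).mem_erase_iff, univ.nodup.mem_erase_iff] at hi
    exact hoff i hi.2.1 hi.1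
  rw [esymm_eq_esymm_map_univ_val, esymm_eq_esymm_map_univ_val, univ_val_eq_cons_cons hjk,
    Multiset.map_cons, Multiset.map_cons, Multiset.map_cons, Multiset.map_cons, ← hr]
  refine Multiset.esymm_cons_cons_le (fun a ha => ?_) hsum hprod m
  obtain ⟨i, -, rfl⟩ := Multiset.mem_map.1 ha
  exact hu i

structure PrefixMajorized (x y : Fin n → ℝ) : Prop where
  sum_Iic_le : ∀ i, ∑ j ∈ Iic i, x j ≤ ∑ j ∈ Iic i, y j
  sum_eq : ∑ i, x i = ∑ i, y i

namespace PrefixMajorized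

variable {x y : Fin n → ℝ}

theorem exists_transfer_pair (h : PrefixMajorized x y) (hne : x ≠ y) :
    ∃ j k, j < k ∧ x j < y j ∧ y k < x k ∧ ∀ i < k, x i ≤ y i := by
  have hex : ∃ k, y k < x k := by
    by_contra! hle
    exact hne <| funext fun i =>
      (sum_eq_sum_iff_of_le fun i _ => hle i).1 h.sum_eq i (mem_univ i)
  obtain ⟨k, hk, hmin⟩ := wellFounded_lt.has_min {i | y i < x i} hex
  have hbelow : ∀ i < k, x i ≤ y i := fun i hi => not_lt.1 fun hlt => hmin i hlt hi
  obtain ⟨j, hjk, hj⟩ : ∃ j < k, x j < y j := by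
    by_contra! hge
    have hle : ∀ i ∈ Iic k, y i ≤ x i := fun i hi =>
      (mem_Iic.1 hi).lt_or_eq.elim (hge i) fun hik => hik ▸ hk.le
    exact (sum_lt_sum hle ⟨k, mem_Iic.2 le_rfl, hk⟩).not_ge (h.sum_Iic_le k)
  exact ⟨j, k, hjk, hj, hk, hbelow⟩

theorem transfer (h : PrefixMajorized x y) {j k : Fin n} (hjk : j < k)
    (hbelow : ∀ i < k, x i ≤ y i) {δ : ℝ} (hδ : δ ≤ y j - x j) :
    PrefixMajorized x (y + Pi.single k δ - Pi.single j δ) := by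
  set v := y + Pi.single k δ - Pi.single j δ
  have hsum : ∀ s : Finset (Fin n), j ∈ s → k ∈ s → ∑ i ∈ s, v i = ∑ i ∈ s, y i := by
    intro s hjs hks
    simp [v, sum_add_distrib, sum_sub_distrib, sum_pi_single', hjs, hks]
  refine ⟨fun i => ?_, by rw [hsum _ (mem_univ j) (mem_univ k)]; exact h.sum_eq⟩
  rcases lt_or_ge i k with hik | hki
  · refine sum_le_sum fun l hl => ?_
    have hlk : l < k := (mem_Iic.1 hl).trans_lt hik
    rcases eq_or_ne l j with rfl | hlj
    · simpa [v, hjk.ne] using le_sub_comm.1 hδ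
    · simpa [v, hlj, hlk.ne] using hbelow l hlk
  · rw [hsum _ (mem_Iic.2 (hjk.le.trans hki)) (mem_Iic.2 hki)]
    exact h.sum_Iic_le i

theorem exists_closer (hx : Antitone x) (hy : ∀ i, 0 ≤ y i) (h : PrefixMajorized x y)
    (hne : x ≠ y) :
    ∃ v : Fin n → ℝ, (∀ i, 0 ≤ v i) ∧ PrefixMajorized x v ∧
      #{i | x i ≠ v i} < #{i | x i ≠ y i} ∧ ∀ m, esymm n m y ≤ esymm n m v := by
  obtain ⟨j, k, hjk, hj, hk, hbelow⟩ := h.exists_transfer_pair hne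
  set δ := min (y j - x j) (x k - y k) with hδ
  have hδpos : 0 < δ := lt_min (sub_pos.2 hj) (sub_pos.2 hk)
  have hδj : δ ≤ y j - x j := min_le_left _ _
  have hδk : δ ≤ x k - y k := min_le_right _ _
  set v := y + Pi.single k δ - Pi.single j δ
  have hvj : v j = y j - δ := by simp [v, hjk.ne]
  have hvk : v k = y k + δ := by simp [v, hjk.ne']
  have hvoff : ∀ i, i ≠ j → i ≠ k → y i = v i := fun i hij hik => by simp [v, hij, hik]
  have hxkj : x k ≤ x j := hx hjk.le
  refine ⟨v, fun i => ?_, h.transfer hjk hbelow hδj, card_lt_card ?_,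
    esymm_le_esymm_of_transfer hjk.ne hy hvoff (by rw [hvj, hvk]; ring)
      (by rw [hvj, hvk]; nlinarith)⟩
  · rcases eq_or_ne i j with rfl | hij
    · linarith [hy k]
    rcases eq_or_ne i k with rfl | hik
    · linarith [hy i]
    · exact hvoff i hij hik ▸ hy i
  · refine (ssubset_iff_of_subset fun i => ?_).2 ?_
    · simp only [mem_filter, mem_univ, true_and]
      intro hi
      rcases eq_or_ne i j with rfl | hij
      · exact hj.ne
      rcases eq_or_ne i k with rfl | hik
      · exact hk.ne'
      · rwa [hvoff i hij hik]
    rcases min_choice (y j - x j) (x k - y k) with hmin | hmin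
    · exact ⟨j, by simp [hj.ne], by simp [hvj, hδ, hmin]⟩
    · exact ⟨k, by simp [hk.ne'], by simp [hvk, hδ, hmin]⟩

theorem esymm_le (hx : Antitone x) (hy : ∀ i, 0 ≤ y i) (h : PrefixMajorized x y) (m : ℕ) :
    esymm n m y ≤ esymm n m x := by
  induction hc : #{i | x i ≠ y i} using Nat.strong_induction_on generalizing y with
  | _ c ih =>
  by_cases hne : x = y
  · rw [hne]
  obtain ⟨v, hv, hxv, hlt, hyv⟩ := h.exists_closer hx hy hne
  exact (hyv m).trans (ih _ (hc ▸ hlt) hv hxv rfl)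

end PrefixMajorized

theorem esymm_ge_of_majorization_general (n : ℕ) (x y : Fin n → ℝ)
    (hy : ∀ i, 0 < y i)
    (hsum : ∑ i, x i = ∑ i, y i)
    (hmaj : ∀ A : Finset (Fin n), ∃ B : Finset (Fin n),
      B.card = A.card ∧ ∑ i ∈ A, x i ≤ ∑ i ∈ B, y i) :
    ∀ k : ℕ, 1 ≤ k → k ≤ n → esymm n k y ≤ esymm n k x := by
  intro k _ _
  obtain ⟨σ, hσ⟩ := exists_perm_antitone_comp x
  obtain ⟨τ, hτ⟩ := exists_perm_antitone_comp y
  rw [← esymm_comp_perm σ k x, ← esymm_comp_perm τ k y]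
  refine PrefixMajorized.esymm_le hσ (fun i => (hy _).le) ⟨fun i => ?_, ?_⟩ k
  · obtain ⟨B, hB, hAB⟩ := hmaj ((Iic i).map σ.toEmbedding)
    calc ∑ j ∈ Iic i, x (σ j) = ∑ j ∈ (Iic i).map σ.toEmbedding, x j :=
        (sum_map _ σ.toEmbedding x).symm
      _ ≤ ∑ j ∈ B, y j := hAB
      _ = ∑ j ∈ B.map τ.symm.toEmbedding, y (τ j) := by simp [sum_map]
      _ ≤ ∑ j ∈ Iic i, y (τ j) := hτ.sum_le_sum_Iic (by simp [hB])
  · simp [Equiv.sum_comp, hsum]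

/-- If `x ≺ y` (majorization: equal total sums, and for every subset `A` there is a
subset `B` of the same cardinality with `∑_{A} x ≤ ∑_{B} y`), then
`e_k(x) ≥ e_k(y)` for every `k ∈ {1,…,n}`. -/
theorem esymm_ge_of_majorization (n : ℕ) (x y : Fin n → ℝ)
    (hx : ∀ i, 0 < x i) (hy : ∀ i, 0 < y i)
    (hsum : ∑ i, x i = ∑ i, y i)
    (hmaj : ∀ A : Finset (Fin n), ∃ B : Finset (Fin n),
      B.card = A.card ∧ ∑ i ∈ A, x i ≤ ∑ i ∈ B, y i) :
    ∀ k : ℕ, 1 ≤ k → k ≤ n → esymm n k y ≤ esymm n k x :=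
  esymm_ge_of_majorization_general n x y hy hsum hmaj
end

section
/- Let I ⊆ ℝ and f₁,…,fₙ : I → ℝ differentiable with Σᵢ fᵢ(t) = 0, f₁(t) ≤ … ≤ fₙ(t), and f₁'(t) ≤ … ≤ fₙ'(t) for all t ∈ I. Let h : I → ℝ be positive, differentiable and monotone increasing. Then g_h(t) = Σᵢ exp(h(t)·fᵢ(t)) is monotone increasing on I. -/
/-!
The derivative of `g = ∑ i, exp (h * f i)` is `h' * ∑ i, f i * exp (h * f i) + h * ∑ i, f' i * exp (h * f i)`.
Since `h ≥ 0`, the weights `exp (h * f i)` are ordered like `f i` and `f' i`, and as `∑ f i = ∑ f' i = 0`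
Chebyshev's sum inequality makes both sums nonnegative.
-/

open Real

theorem Monovary.sum_mul_nonneg_of_sum_eq_zero {ι α : Type*} [Fintype ι] [Semiring α]
    [LinearOrder α] [IsStrictOrderedRing α] [ExistsAddOfLE α] {f g : ι → α}
    (hfg : Monovary f g) (hf : ∑ i, f i = 0) : 0 ≤ ∑ i, f i * g i := by
  have hcheb := hfg.sum_mul_sum_le_card_mul_sum
  rw [hf, zero_mul] at hcheb
  cases isEmpty_or_nonempty ι
  · simp
  · exact nonneg_of_mul_nonneg_right hcheb (by exact_mod_cast Fintype.card_pos)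

theorem sum_exp_mul_mul_add_nonneg {ι : Type*} [Fintype ι] [LinearOrder ι] {a b : ℝ}
    {x y : ι → ℝ} (ha : 0 ≤ a) (hb : 0 ≤ b) (hx : Monotone x) (hy : Monotone y)
    (hx₀ : ∑ i, x i = 0) (hy₀ : ∑ i, y i = 0) :
    0 ≤ ∑ i, exp (a * x i) * (b * x i + a * y i) := by
  have hexp : Monotone fun i => exp (a * x i) :=
    exp_monotone.comp ((monotone_mul_left_of_nonneg ha).comp hx)
  have hxE := (hx.monovary hexp).sum_mul_nonneg_of_sum_eq_zero hx₀
  have hyE := (hy.monovary hexp).sum_mul_nonneg_of_sum_eq_zero hy₀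
  calc 0 ≤ b * ∑ i, x i * exp (a * x i) + a * ∑ i, y i * exp (a * x i) := by positivity
    _ = ∑ i, exp (a * x i) * (b * x i + a * y i) := by
      simp only [Finset.mul_sum, ← Finset.sum_add_distrib]
      exact Finset.sum_congr rfl fun i _ => by ring

theorem sum_eq_zero_of_hasDerivAt_of_sum_eventuallyEq_zero {ι 𝕜 F : Type*} [Fintype ι]
    [NontriviallyNormedField 𝕜] [NormedAddCommGroup F] [NormedSpace 𝕜 F]
    {f : ι → 𝕜 → F} {f' : ι → F} {t : 𝕜} (hf : ∀ i, HasDerivAt (f i) (f' i) t)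
    (hf₀ : (fun u => ∑ i, f i u) =ᶠ[nhds t] fun _ => 0) : ∑ i, f' i = 0 :=
  (HasDerivAt.fun_sum fun i _ => hf i).unique ((hasDerivAt_const t 0).congr_of_eventuallyEq hf₀)

theorem sum_exp_mul_monotone_of_ordered (I : Set ℝ) (hI : Convex ℝ I) (n : ℕ)
    (f f' : Fin n → ℝ → ℝ) (h h' : ℝ → ℝ)
    (hderiv : ∀ i, ∀ t ∈ I, HasDerivAt (f i) (f' i t) t)
    (hsum : ∀ t ∈ I, ∑ i, f i t = 0)
    (hord : ∀ t ∈ I, ∀ i j : Fin n, i ≤ j → f i t ≤ f j t)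
    (hord' : ∀ t ∈ I, ∀ i j : Fin n, i ≤ j → f' i t ≤ f' j t)
    (hhpos : ∀ t ∈ I, 0 < h t)
    (hhderiv : ∀ t ∈ I, HasDerivAt h (h' t) t)
    (hhmono : MonotoneOn h I) :
    MonotoneOn (fun t => ∑ i, exp (h t * f i t)) I := by
  have hg : ∀ t ∈ I, HasDerivAt (fun t => ∑ i, exp (h t * f i t))
      (∑ i, exp (h t * f i t) * (h' t * f i t + h t * f' i t)) t := fun t ht =>
    HasDerivAt.fun_sum fun i _ => ((hhderiv t ht).mul (hderiv i t ht)).exp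
  refine monotoneOn_of_hasDerivWithinAt_nonneg hI
    (fun t ht => (hg t ht).continuousAt.continuousWithinAt)
    (fun t ht => (hg t (interior_subset ht)).hasDerivWithinAt) fun t ht => ?_
  have hI_nhds : I ∈ nhds t := mem_interior_iff_mem_nhds.mp ht
  have htI := interior_subset ht
  have hh' : 0 ≤ h' t := by
    simpa only [(hhderiv t htI).hasDerivWithinAt.derivWithin
      (uniqueDiffWithinAt_of_mem_nhds hI_nhds)] using hhmono.derivWithin_nonneg (x := t)
  have hsum' : ∑ i, f' i t = 0 :=
    sum_eq_zero_of_hasDerivAt_of_sum_eventuallyEq_zero (fun i => hderiv i t htI)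
      (Filter.eventually_of_mem hI_nhds hsum)
  exact sum_exp_mul_mul_add_nonneg (hhpos t htI).le hh' (fun i j => hord t htI i j)
    (fun i j => hord' t htI i j) (hsum t htI) hsum'
end

section
/- Let a,b,c,x,y,z ∈ ℝ satisfy a ≥ b ≥ c, x ≥ y ≥ z, a+b+c = x+y+z = 0, and a²+b²+c² = x²+y²+z². Then exp(a)+exp(b)+exp(c) ≤ exp(x)+exp(y)+exp(z) if and only if a ≤ x. -/
open Real

/-!
A zero-sum triple `a ≥ b ≥ c` with `a² + b² + c² = r` is determined by its largest entry:
`b, c = -a/2 ± √(r/2 - 3a²/4)`, and `a` ranges over `[√(r/6), √(2r/3)]`. So it suffices that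
`exp a + exp b + exp c`, as a function of `a`, is strictly increasing there. Writing `g` for the
square root, its derivative is `exp (-a/2) / g · (g exp (3a/2) - g cosh g - (3a/2) sinh g)`, which
is positive because `g < 3a/2` in the interior, and `v cosh v + u sinh v < v exp u` for
`0 < v < u` follows from `sinh v ≤ v exp v` and `1 + (u - v) < exp (u - v)`.
-/

theorem sinh_le_mul_exp (v : ℝ) : sinh v ≤ v * exp v := by
  have h : exp (-v) = exp v * exp (-(2 * v)) := by rw [← exp_add]; ring_nf
  have := add_one_le_exp (-(2 * v))
  rw [sinh_eq, h]
  nlinarith [exp_pos v]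

theorem mul_cosh_add_mul_sinh_lt_mul_exp {u v : ℝ} (hv : 0 < v) (hvu : v < u) :
    v * cosh v + u * sinh v < v * exp u :=
  calc v * cosh v + u * sinh v = v * exp v + (u - v) * sinh v := by rw [← cosh_add_sinh]; ring
    _ ≤ v * exp v + (u - v) * (v * exp v) := by gcongr; exact sinh_le_mul_exp v
    _ = v * exp v * (u - v + 1) := by ring
    _ < v * exp v * exp (u - v) := by gcongr; exact add_one_lt_exp (by linarith)
    _ = v * exp u := by rw [mul_assoc, ← exp_add, add_sub_cancel]

noncomputable def halfGap (r t : ℝ) : ℝ := √(r / 2 - 3 * t ^ 2 / 4)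

noncomputable def expSumOfMax (r t : ℝ) : ℝ :=
  exp t + exp (-t / 2 + halfGap r t) + exp (-t / 2 - halfGap r t)

theorem halfGap_eq_of_sum_eq_zero {a b c : ℝ} (hbc : c ≤ b) (habc : a + b + c = 0) :
    halfGap (a ^ 2 + b ^ 2 + c ^ 2) a = a / 2 + b := by
  rw [halfGap, show (a ^ 2 + b ^ 2 + c ^ 2) / 2 - 3 * a ^ 2 / 4 = (a / 2 + b) ^ 2 by
    rw [show c = -a - b by linarith]; ring]
  exact sqrt_sq (by linarith)

theorem expSumOfMax_eq_of_sum_eq_zero {a b c : ℝ} (hbc : c ≤ b) (habc : a + b + c = 0) :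
    expSumOfMax (a ^ 2 + b ^ 2 + c ^ 2) a = exp a + exp b + exp c := by
  rw [expSumOfMax, halfGap_eq_of_sum_eq_zero hbc habc, show -a / 2 + (a / 2 + b) = b by ring,
    show -a / 2 - (a / 2 + b) = c by linarith]

theorem mem_Icc_sqrt_of_sum_eq_zero {a b c : ℝ} (hab : b ≤ a) (hbc : c ≤ b)
    (habc : a + b + c = 0) :
    a ∈ Set.Icc √((a ^ 2 + b ^ 2 + c ^ 2) / 6) √(2 * (a ^ 2 + b ^ 2 + c ^ 2) / 3) := by
  have hc : c = -a - b := by linarith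
  have ha : 0 ≤ a := by linarith
  constructor
  · exact sqrt_le_iff.mpr ⟨ha, by rw [hc]; nlinarith⟩
  · exact (le_sqrt ha (by positivity)).mpr (by rw [hc]; nlinarith)

theorem hasDerivAt_halfGap {r t : ℝ} (h : 0 < halfGap r t) :
    HasDerivAt (halfGap r) (-(3 * t) / (4 * halfGap r t)) t := by
  have hq : HasDerivAt (fun s : ℝ => r / 2 - 3 * s ^ 2 / 4) (-(3 * t) / 2) t := by
    have hpoly := ((hasDerivAt_pow 2 t).const_mul (3 / 4 : ℝ)).const_sub (r / 2)
    rw [show (fun s : ℝ => r / 2 - 3 * s ^ 2 / 4) = fun s => r / 2 - 3 / 4 * s ^ 2 by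
      funext s; ring]
    exact hpoly.congr_deriv (by norm_num; ring)
  refine ((hasDerivAt_sqrt (sqrt_pos.mp h).ne').comp t hq).congr_deriv ?_
  unfold halfGap; field_simp; ring

theorem hasDerivAt_expSumOfMax {r t : ℝ} (h : 0 < halfGap r t) :
    HasDerivAt (expSumOfMax r) (exp (-t / 2) / halfGap r t *
      (halfGap r t * exp (3 * t / 2) - (halfGap r t * cosh (halfGap r t)
        + 3 * t / 2 * sinh (halfGap r t)))) t := by
  have hg := hasDerivAt_halfGap h
  have hhalf : HasDerivAt (fun s : ℝ => -s / 2) (-1 / 2) t := (hasDerivAt_neg t).div_const 2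
  refine (((hasDerivAt_exp t).add (hhalf.add hg).exp).add (hhalf.sub hg).exp).congr_deriv ?_
  set g := halfGap r t
  simp only [Pi.add_apply, Pi.sub_apply]
  rw [cosh_eq, sinh_eq, show exp t = exp (-t / 2) * exp (3 * t / 2) by rw [← exp_add]; ring_nf,
    show exp (-t / 2 + g) = exp (-t / 2) * exp g by rw [← exp_add],
    show exp (-t / 2 - g) = exp (-t / 2) * exp (-g) by rw [← exp_add]; ring_nf]
  field_simp
  ring

theorem strictMonoOn_expSumOfMax (r : ℝ) :
    StrictMonoOn (expSumOfMax r) (Set.Icc √(r / 6) √(2 * r / 3)) := by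
  refine strictMonoOn_of_deriv_pos (convex_Icc _ _) (by unfold expSumOfMax halfGap; fun_prop) ?_
  rw [interior_Icc]
  rintro t ⟨hlo, hhi⟩
  have ht : 0 < t := (sqrt_nonneg _).trans_lt hlo
  have hlo' := (sqrt_lt' ht).mp hlo
  have hhi' := (lt_sqrt ht.le).mp hhi
  have hg : 0 < halfGap r t := sqrt_pos.mpr (by linarith)
  have hg' : halfGap r t < 3 * t / 2 := by
    rw [halfGap, sqrt_lt' (by linarith)]; linarith
  rw [(hasDerivAt_expSumOfMax hg).deriv]
  exact mul_pos (by positivity) (sub_pos.mpr (mul_cosh_add_mul_sinh_lt_mul_exp hg hg'))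

theorem sum_exp_le_iff (a b c x y z : ℝ)
    (hab : b ≤ a) (hbc : c ≤ b) (hxy : y ≤ x) (hyz : z ≤ y)
    (habc : a + b + c = 0) (hxyz : x + y + z = 0)
    (hsq : a ^ 2 + b ^ 2 + c ^ 2 = x ^ 2 + y ^ 2 + z ^ 2) :
    exp a + exp b + exp c ≤ exp x + exp y + exp z ↔ a ≤ x := by
  have ha := mem_Icc_sqrt_of_sum_eq_zero hab hbc habc
  have hx := mem_Icc_sqrt_of_sum_eq_zero hxy hyz hxyz
  rw [← hsq] at hx
  rw [← expSumOfMax_eq_of_sum_eq_zero hbc habc, ← expSumOfMax_eq_of_sum_eq_zero hyz hxyz,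
    ← hsq]
  exact (strictMonoOn_expSumOfMax _).le_iff_le ha hx
end

section
/- Let a₁,…,aₙ, b₁,…,bₙ be positive reals and k ≥ 0. Then Σᵢ aᵢ·log(aᵢ/bᵢ + k) ≥ (Σᵢ aᵢ)·log((Σᵢ aᵢ)/(Σᵢ bᵢ) + k), with equality if and only if all ratios aᵢ/bᵢ are equal. -/
/-!
With weights `bᵢ / ∑ b` and points `aᵢ / bᵢ`, Jensen's inequality for a convex `f` says that the
perspective `(a, b) ↦ b f(a/b)` of `f` is subadditive, with equality for strictly convex `f` exactly
when all ratios `aᵢ / bᵢ` agree. For `f x = x log (x + k)` the perspective is `a log (a/b + k)`, and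
`f` is strictly convex when `k ≥ 0` as the strictly convex `(x + k) log (x + k)` minus the concave
`k log (x + k)`.
-/

open Real Finset

theorem strictConvexOn_mul_log_add {k : ℝ} (hk : 0 ≤ k) :
    StrictConvexOn ℝ (Set.Ioi (-k)) (fun x => x * log (x + k)) := by
  have hshift : (fun z => k + z) ⁻¹' Set.Ioi 0 = Set.Ioi (-k) := by
    ext x
    simp [neg_lt_iff_pos_add']
  have hent : StrictConvexOn ℝ (Set.Ioi (-k)) (fun x => (x + k) * log (x + k)) := by
    have := (strictConvexOn_mul_log.subset Set.Ioi_subset_Ici_self (convex_Ioi 0)).translate_right k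
    rw [hshift] at this
    simpa only [Function.comp_def, add_comm k] using this
  have hlog : ConcaveOn ℝ (Set.Ioi (-k)) (fun x => k * log (x + k)) := by
    have := strictConcaveOn_log_Ioi.concaveOn.translate_right k
    rw [hshift] at this
    simpa only [Function.comp_def, add_comm k, smul_eq_mul] using this.smul hk
  have hsplit : (fun x => x * log (x + k)) =
      (fun x => (x + k) * log (x + k)) - fun x => k * log (x + k) := by
    ext x
    simp only [Pi.sub_apply]
    ring
  exact hsplit ▸ hent.sub_concaveOn hlog

section Perspective

variable {𝕜 ι : Type*} [Field 𝕜]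

def perspective (f : 𝕜 → 𝕜) (a b : 𝕜) : 𝕜 := b * f (a / b)

variable {f : 𝕜 → 𝕜} {t : Finset ι} {a b : ι → 𝕜}

theorem perspective_sum_eq_mul_map_sum_smul (hb : ∀ i ∈ t, b i ≠ 0) :
    perspective f (∑ i ∈ t, a i) (∑ i ∈ t, b i) =
      (∑ i ∈ t, b i) * f (∑ i ∈ t, (b i / ∑ j ∈ t, b j) • (a i / b i)) := by
  rw [perspective, sum_div]
  congr 2
  refine sum_congr rfl fun i hi => ?_
  rw [smul_eq_mul, div_mul_div_comm, mul_comm (b i), mul_div_mul_right _ _ (hb i hi)]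

theorem sum_perspective_eq_mul_sum_smul (hB : ∑ i ∈ t, b i ≠ 0) :
    ∑ i ∈ t, perspective f (a i) (b i) =
      (∑ i ∈ t, b i) * ∑ i ∈ t, (b i / ∑ j ∈ t, b j) • f (a i / b i) := by
  simp only [perspective, smul_eq_mul, div_mul_eq_mul_div, ← sum_div, mul_div_cancel₀ _ hB]

theorem sum_div_sum_self (hB : ∑ i ∈ t, b i ≠ 0) : ∑ i ∈ t, b i / ∑ j ∈ t, b j = 1 := by
  rw [← sum_div, div_self hB]

variable [LinearOrder 𝕜] [IsStrictOrderedRing 𝕜] {s : Set 𝕜}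

theorem ConvexOn.perspective_sum_le (hf : ConvexOn 𝕜 s f) (hb : ∀ i ∈ t, 0 < b i)
    (hs : ∀ i ∈ t, a i / b i ∈ s) :
    perspective f (∑ i ∈ t, a i) (∑ i ∈ t, b i) ≤ ∑ i ∈ t, perspective f (a i) (b i) := by
  obtain rfl | ht := t.eq_empty_or_nonempty
  · simp [perspective]
  have hB := sum_pos hb ht
  rw [perspective_sum_eq_mul_map_sum_smul fun i hi => (hb i hi).ne',
    sum_perspective_eq_mul_sum_smul hB.ne']
  gcongr
  exact hf.map_sum_le (fun i hi => (div_pos (hb i hi) hB).le) (sum_div_sum_self hB.ne') hs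

theorem StrictConvexOn.perspective_sum_eq_iff (hf : StrictConvexOn 𝕜 s f)
    (hb : ∀ i ∈ t, 0 < b i) (hs : ∀ i ∈ t, a i / b i ∈ s) :
    perspective f (∑ i ∈ t, a i) (∑ i ∈ t, b i) = ∑ i ∈ t, perspective f (a i) (b i) ↔
      ∀ ⦃i⦄, i ∈ t → ∀ ⦃j⦄, j ∈ t → a i / b i = a j / b j := by
  obtain rfl | ht := t.eq_empty_or_nonempty
  · simp [perspective]
  have hB := sum_pos hb ht
  rw [perspective_sum_eq_mul_map_sum_smul fun i hi => (hb i hi).ne',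
    sum_perspective_eq_mul_sum_smul hB.ne', mul_right_inj' hB.ne']
  exact hf.map_sum_eq_iff_of_pos (fun i hi => div_pos (hb i hi) hB) (sum_div_sum_self hB.ne') hs

end Perspective

theorem perspective_mul_log_add {a b : ℝ} (k : ℝ) (hb : b ≠ 0) :
    perspective (fun x => x * log (x + k)) a b = a * log (a / b + k) := by
  rw [perspective, ← mul_assoc, mul_div_cancel₀ _ hb]

theorem stronger_log_sum_inequality (n : ℕ) (a b : Fin n → ℝ)
    (ha : ∀ i, 0 < a i) (hb : ∀ i, 0 < b i) (k : ℝ) (hk : 0 ≤ k) :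
    (∑ i, a i) * log ((∑ i, a i) / (∑ i, b i) + k) ≤
        ∑ i, a i * log (a i / b i + k) ∧
      ((∑ i, a i * log (a i / b i + k) =
          (∑ i, a i) * log ((∑ i, a i) / (∑ i, b i) + k)) ↔
        ∀ i j : Fin n, a i / b i = a j / b j) := by
  obtain _ | n := n
  · simp
  have hB : ∑ i, b i ≠ 0 := (sum_pos (fun i _ => hb i) univ_nonempty).ne'
  have hsum : ∑ i, a i * log (a i / b i + k) =
      ∑ i, perspective (fun x => x * log (x + k)) (a i) (b i) :=
    sum_congr rfl fun i _ => (perspective_mul_log_add k (hb i).ne').symm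
  have hf := strictConvexOn_mul_log_add hk
  have hb' : ∀ i ∈ univ, 0 < b i := fun i _ => hb i
  have hs : ∀ i ∈ univ, a i / b i ∈ Set.Ioi (-k) := fun i _ =>
    Set.mem_Ioi.2 ((neg_nonpos.2 hk).trans_lt (div_pos (ha i) (hb i)))
  rw [hsum, ← perspective_mul_log_add k hB, eq_comm, hf.perspective_sum_eq_iff hb' hs]
  exact ⟨hf.convexOn.perspective_sum_le hb' hs, by simp⟩
end

section
/- Let a, b be probability vectors in ℝ₊ⁿ (all entries positive, Σᵢ aᵢ = Σᵢ bᵢ = 1) and let k₁,…,k_m ∈ [0,∞). Then Σᵢ aᵢ·log(∏_{s=1}^m (aᵢ/bᵢ + k_s)) ≥ log(∏_{s=1}^m (1 + k_s)). -/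
/-! For each `s` separately, `x ↦ x * log (x + k s)` is convex, so Jensen's inequality with
weights `bᵢ` at the points `aᵢ / bᵢ` (whose `b`-mean is `∑ aᵢ = 1`) gives
`log (1 + k s) ≤ ∑ᵢ aᵢ log (aᵢ / bᵢ + k s)`; summing over `s` and turning the logarithm of the
product into a sum yields the theorem. -/

open Real Set Finset

lemma convexOn_sub_mul_log {k : ℝ} (hk : 0 ≤ k) :
    ConvexOn ℝ (Ioi 0) fun y => (y - k) * log y := by
  have hlog : ConvexOn ℝ (Ioi 0) (-(k • log)) := (strictConcaveOn_log_Ioi.concaveOn.smul hk).neg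
  refine ((convexOn_mul_log.subset Ioi_subset_Ici_self (convex_Ioi 0)).add hlog).congr
    fun y _ => ?_
  simp only [Pi.add_apply, Pi.neg_apply, Pi.smul_apply, smul_eq_mul]
  ring

lemma convexOn_mul_log_add {k : ℝ} (hk : 0 ≤ k) :
    ConvexOn ℝ (Ioi (-k)) fun x => x * log (x + k) := by
  have hdom : (fun z => k + z) ⁻¹' Ioi 0 = Ioi (-k) := by
    ext x
    simp [neg_lt_iff_pos_add']
  refine (hdom ▸ (convexOn_sub_mul_log hk).translate_right k).congr fun x _ => ?_
  simp only [Function.comp_apply, add_comm k, add_sub_cancel_right]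

lemma log_one_add_le_sum_mul_log_div_add {ι : Type*} [Fintype ι] {a b : ι → ℝ}
    (ha : ∀ i, 0 < a i) (hb : ∀ i, 0 < b i) (hsa : ∑ i, a i = 1) (hsb : ∑ i, b i = 1)
    {k : ℝ} (hk : 0 ≤ k) :
    log (1 + k) ≤ ∑ i, a i * log (a i / b i + k) := by
  have hweight : ∀ i, b i * (a i / b i) = a i := fun i => mul_div_cancel₀ _ (hb i).ne'
  have hjensen := (convexOn_mul_log_add hk).map_sum_le (t := univ) (w := b)
    (p := fun i => a i / b i) (fun i _ => (hb i).le) hsb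
    (fun i _ => (neg_nonpos.2 hk).trans_lt (div_pos (ha i) (hb i)))
  simpa only [smul_eq_mul, hweight, hsa, one_mul, ← mul_assoc] using hjensen

theorem generalized_information_inequality (n m : ℕ) (a b : Fin n → ℝ)
    (ha : ∀ i, 0 < a i) (hb : ∀ i, 0 < b i)
    (hsa : ∑ i, a i = 1) (hsb : ∑ i, b i = 1)
    (k : Fin m → ℝ) (hk : ∀ s, 0 ≤ k s) :
    log (∏ s, (1 + k s)) ≤ ∑ i, a i * log (∏ s, (a i / b i + k s)) := by
  have hpos : ∀ i s, 0 < a i / b i + k s := fun i s =>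
    add_pos_of_pos_of_nonneg (div_pos (ha i) (hb i)) (hk s)
  have hrhs : ∑ i, a i * log (∏ s, (a i / b i + k s))
      = ∑ s, ∑ i, a i * log (a i / b i + k s) := by
    rw [sum_comm]
    refine sum_congr rfl fun i _ => ?_
    rw [log_prod fun s _ => (hpos i s).ne', mul_sum]
  rw [hrhs, log_prod fun s _ => (add_pos_of_pos_of_nonneg one_pos (hk s)).ne']
  exact sum_le_sum fun s _ => log_one_add_le_sum_mul_log_div_add ha hb hsa hsb (hk s)
end
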